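/- arXiv:2206.00073 — 6 statements merged into one kernel-verified Lean document; each statement's English description precedes it below -/
import Mathlib

section
/- For every Hessenberg function m : [n] → [n] (non-decreasing with m(i) ≥ i for all i), there is a unique lexicographically greatest permutation w_m ∈ S_n satisfying w_m(i) ≤ m(i) for all i ∈ [n], and this permutation is 312-avoiding. -/
open Equiv

/-- `rk w i j` = #{k ≤ i : w(k) ≤ j} (1-indexed), for `w ∈ S_n`. -/
def rk {n : ℕ} (w : Equiv.Perm (Fin n)) (i j : ℕ) : ℕ :=
  (Finset.univ.filter (fun k : Fin n => (k : ℕ) + 1 ≤ i ∧ (w k : ℕ) + 1 ≤ j)).card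

/-- Bruhat order on `S_n` via the rank-matrix criterion: `z ≤ w` iff
`r_{i,j}(z) ≥ r_{i,j}(w)` for all `i,j`. -/
def BruhatLE {n : ℕ} (z w : Equiv.Perm (Fin n)) : Prop :=
  ∀ i ≤ n, ∀ j ≤ n, rk w i j ≤ rk z i j

def BruhatLT {n : ℕ} (z w : Equiv.Perm (Fin n)) : Prop :=
  BruhatLE z w ∧ z ≠ w

/-- Coxeter length = number of inversions. -/
def len {n : ℕ} (w : Equiv.Perm (Fin n)) : ℕ :=
  (Finset.univ.filter (fun p : Fin n × Fin n => p.1 < p.2 ∧ w p.2 < w p.1)).card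

/-- One-line notation of `w`, 1-indexed, extended by the identity outside `[1,n]`
(so that `w(n+1) = n+1`). -/
def ol {n : ℕ} (w : Equiv.Perm (Fin n)) (k : ℕ) : ℕ :=
  if h : 1 ≤ k ∧ k ≤ n then ((w ⟨k - 1, by omega⟩ : Fin n) : ℕ) + 1 else k

/-- The coessential set of `w` (1-indexed pairs). -/
def Coess {n : ℕ} (w : Equiv.Perm (Fin n)) : Set (ℕ × ℕ) :=
  {p | 1 ≤ p.1 ∧ p.1 ≤ n ∧ 1 ≤ p.2 ∧ p.2 ≤ n ∧
    ol w p.1 ≤ p.2 ∧ p.2 < ol w (p.1 + 1) ∧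
    ol w⁻¹ p.2 ≤ p.1 ∧ p.1 < ol w⁻¹ (p.2 + 1)}

/-- `w` contains the pattern 312. -/
def Has312 {n : ℕ} (w : Equiv.Perm (Fin n)) : Prop :=
  ∃ a b c : Fin n, a < b ∧ b < c ∧ w b < w c ∧ w c < w a

/-- `w` contains the pattern 3412. -/
def Has3412 {n : ℕ} (w : Equiv.Perm (Fin n)) : Prop :=
  ∃ a b c d : Fin n, a < b ∧ b < c ∧ c < d ∧ w c < w d ∧ w d < w a ∧ w a < w b

/-- `w` contains the pattern 4231. -/
def Has4231 {n : ℕ} (w : Equiv.Perm (Fin n)) : Prop :=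
  ∃ a b c d : Fin n, a < b ∧ b < c ∧ c < d ∧ w d < w b ∧ w b < w c ∧ w c < w a

/-- `w` is smooth iff it avoids 3412 and 4231. -/
def SmoothPerm {n : ℕ} (w : Equiv.Perm (Fin n)) : Prop := ¬ Has3412 w ∧ ¬ Has4231 w

/-- `w` is codominant iff `i ≤ j` for every `(i,j)` in the coessential set. -/
def Codominant {n : ℕ} (w : Equiv.Perm (Fin n)) : Prop :=
  ∀ p ∈ Coess w, p.1 ≤ p.2

/-- Lexicographic comparison on one-line notations. -/
def LexLe {n : ℕ} (u w : Equiv.Perm (Fin n)) : Prop :=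
  u = w ∨ ∃ i : Fin n, (∀ j < i, u j = w j) ∧ u i < w i

/-- `m` is a Hessenberg function (0-indexed): non-decreasing and `m i ≥ i`. -/
def Hess {n : ℕ} (m : Fin n → Fin n) : Prop :=
  Monotone m ∧ ∀ i, i ≤ m i

/-- `w` is the lexicographically greatest permutation with `w i ≤ m i` for all `i`. -/
def IsLexMax {n : ℕ} (m : Fin n → Fin n) (w : Equiv.Perm (Fin n)) : Prop :=
  (∀ i, w i ≤ m i) ∧ ∀ u : Equiv.Perm (Fin n), (∀ i, u i ≤ m i) → LexLe u w

instance {n : ℕ} (z w : Equiv.Perm (Fin n)) : Decidable (BruhatLE z w) := by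
  unfold BruhatLE; exact Nat.decidableBallLE _ _


lemma lexle_iff' {n : ℕ} (u w : Equiv.Perm (Fin n)) :
    LexLe u w ↔ toLex (⇑u) ≤ toLex (⇑w) := by
  rw [le_iff_lt_or_eq]
  constructor
  · rintro (rfl | ⟨i, hji, hi⟩)
    · exact Or.inr rfl
    · exact Or.inl ⟨i, hji, hi⟩
  · rintro (⟨i, hji, hi⟩ | h)
    · exact Or.inr ⟨i, hji, hi⟩
    · exact Or.inl (Equiv.coe_fn_injective h)

lemma lexmax_not_has312 {n : ℕ} (m : Fin n → Fin n) (hm : Hess m)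
    (w : Equiv.Perm (Fin n)) (hw : IsLexMax m w) : ¬ Has312 w := by
  rintro ⟨a, b, c, hab, hbc, hwbc, hwca⟩
  set u := w * Equiv.swap b c with hu
  have hub : u b = w c := by simp [hu, Equiv.Perm.mul_apply]
  have huc : u c = w b := by simp [hu, Equiv.Perm.mul_apply]
  have huo : ∀ i, i ≠ b → i ≠ c → u i = w i := by
    intro i h1 h2
    simp [hu, Equiv.Perm.mul_apply, Equiv.swap_apply_of_ne_of_ne h1 h2]
  have hle : ∀ i, u i ≤ m i := by
    intro i
    rcases eq_or_ne i b with rfl | h1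
    · rw [hub]
      exact le_trans (le_trans hwca.le (hw.1 a)) (hm.1 hab.le)
    rcases eq_or_ne i c with rfl | h2
    · rw [huc]
      exact le_trans (hw.1 b) (hm.1 hbc.le)
    · rw [huo i h1 h2]; exact hw.1 i
  have hne : w b ≠ w c := ne_of_lt hwbc
  rcases hw.2 u hle with heq | ⟨i, hji, hi⟩
  · apply hne
    have : u c = w c := by rw [heq]
    rw [huc] at this; exact this
  · rcases eq_or_ne i b with rfl | h1
    · rw [hub] at hi; exact absurd hi (not_lt.2 hwbc.le)
    rcases eq_or_ne i c with rfl | h2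
    · have := hji b hbc
      rw [hub] at this
      exact hne this.symm
    · rw [huo i h1 h2] at hi; exact lt_irrefl _ hi

/-- For every Hessenberg function there is a unique lexicographically greatest
permutation below it, and this permutation avoids 312. -/
theorem stmt1 {n : ℕ} (m : Fin n → Fin n) (hm : Hess m) :
    (∃! w : Equiv.Perm (Fin n), IsLexMax m w) ∧
    ∀ w : Equiv.Perm (Fin n), IsLexMax m w → ¬ Has312 w := by
  haveI : WellFoundedLT (Fin n) := Finite.to_wellFoundedLT
  constructor
  · have hS : (Finset.univ.filter
        (fun w : Equiv.Perm (Fin n) => ∀ i, w i ≤ m i)).Nonempty := by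
      exact ⟨1, by simpa using hm.2⟩
    obtain ⟨w, hwS, hmax⟩ := Finset.exists_max_image
      (Finset.univ.filter (fun w : Equiv.Perm (Fin n) => ∀ i, w i ≤ m i))
      (fun w : Equiv.Perm (Fin n) => toLex (⇑w)) hS
    have hwm : ∀ i, w i ≤ m i := by simpa using hwS
    have hlex : IsLexMax m w := by
      refine ⟨hwm, fun u hu => ?_⟩
      rw [lexle_iff']
      exact hmax u (by simpa using hu)
    refine ⟨w, hlex, fun v hv => ?_⟩
    have h1 := (lexle_iff' v w).1 (hlex.2 v hv.1)
    have h2 := (lexle_iff' w v).1 (hv.2 w hlex.1)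
    have h3 : toLex (⇑v) = toLex (⇑w) := le_antisymm h1 h2
    exact Equiv.coe_fn_injective h3
  · exact fun w hw => lexmax_not_has312 m hm w hw
end

section
/- The map sending a Hessenberg function m to the lexicographically greatest permutation w_m with w_m(i) ≤ m(i) for all i is a bijection between Hessenberg functions on [n] and 312-avoiding permutations in S_n. -/
open Equiv

section Aux

open Equiv Finset

variable {n : ℕ}

/-- Pointwise max function `M w i = max_{j ≤ i} w j`. -/
def Mfun (w : Equiv.Perm (Fin n)) (i : Fin n) : Fin n :=
  (Finset.Iic i).sup' Finset.nonempty_Iic w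

lemma le_Mfun (w : Equiv.Perm (Fin n)) {j i : Fin n} (h : j ≤ i) : w j ≤ Mfun w i :=
  Finset.le_sup' _ (Finset.mem_Iic.2 h)

lemma hess_Mfun (w : Equiv.Perm (Fin n)) : Hess (Mfun w) := by
  constructor
  · intro i i' h
    exact Finset.sup'_le _ _ fun j hj => le_Mfun w ((Finset.mem_Iic.1 hj).trans h)
  · intro i
    by_contra hlt
    push_neg at hlt
    have hsub : (Finset.Iic i).image w ⊆ Finset.Iic (Mfun w i) := by
      intro x hx
      obtain ⟨j, hj, rfl⟩ := Finset.mem_image.1 hx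
      exact Finset.mem_Iic.2 (le_Mfun w (Finset.mem_Iic.1 hj))
    have hc := Finset.card_le_card hsub
    rw [Finset.card_image_of_injective _ w.injective, Fin.card_Iic, Fin.card_Iic] at hc
    omega

lemma lexle_refl (w : Equiv.Perm (Fin n)) : LexLe w w := Or.inl rfl

lemma lexle_total (u w : Equiv.Perm (Fin n)) : LexLe u w ∨ LexLe w u := by
  by_cases h : u = w
  · exact Or.inl (Or.inl h)
  have hD : (Finset.univ.filter fun i : Fin n => u i ≠ w i).Nonempty := by
    by_contra hD
    rw [Finset.not_nonempty_iff_eq_empty, Finset.filter_eq_empty_iff] at hD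
    exact h (Equiv.ext fun i => not_ne_iff.1 (hD (Finset.mem_univ i)))
  set i := (Finset.univ.filter fun i : Fin n => u i ≠ w i).min' hD with hi
  have hmem := (Finset.univ.filter fun i : Fin n => u i ≠ w i).min'_mem hD
  rw [Finset.mem_filter] at hmem
  have hag : ∀ j < i, u j = w j := by
    intro j hj
    by_contra hne
    exact absurd (Finset.min'_le _ j (Finset.mem_filter.2 ⟨Finset.mem_univ j, hne⟩)) (not_le.2 hj)
  rcases hmem.2.lt_or_gt with hlt | hlt
  · exact Or.inl (Or.inr ⟨i, hag, hlt⟩)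
  · exact Or.inr (Or.inr ⟨i, fun j hj => (hag j hj).symm, hlt⟩)

lemma lexle_trans {u v w : Equiv.Perm (Fin n)} (h1 : LexLe u v) (h2 : LexLe v w) :
    LexLe u w := by
  rcases h1 with rfl | ⟨i, ha, hl⟩
  · exact h2
  rcases h2 with rfl | ⟨i', ha', hl'⟩
  · exact Or.inr ⟨i, ha, hl⟩
  rcases lt_trichotomy i i' with h | rfl | h
  · exact Or.inr ⟨i, fun j hj => (ha j hj).trans (ha' j (hj.trans h)), (ha' i h ▸ hl)⟩
  · exact Or.inr ⟨i, fun j hj => (ha j hj).trans (ha' j hj), hl.trans hl'⟩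
  · exact Or.inr ⟨i', fun j hj => (ha j (hj.trans h)).trans (ha' j hj), (ha i' h) ▸ hl'⟩

lemma lexle_antisymm {u w : Equiv.Perm (Fin n)} (h1 : LexLe u w) (h2 : LexLe w u) :
    u = w := by
  rcases h1 with rfl | ⟨i, ha, hl⟩
  · rfl
  rcases h2 with rfl | ⟨i', ha', hl'⟩
  · rfl
  exfalso
  rcases lt_trichotomy i i' with h | rfl | h
  · exact absurd (ha' i h) (ne_of_gt hl)
  · exact absurd (hl.trans hl') (lt_irrefl _)
  · exact absurd (ha i' h) (ne_of_gt hl')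

lemma exists_lexmax_mem (s : Finset (Equiv.Perm (Fin n))) (hs : s.Nonempty) :
    ∃ w ∈ s, ∀ u ∈ s, LexLe u w := by
  induction hs using Finset.Nonempty.cons_induction with
  | singleton a => exact ⟨a, Finset.mem_singleton_self a,
      fun u hu => (Finset.mem_singleton.1 hu) ▸ lexle_refl a⟩
  | cons a s ha hs ih =>
    obtain ⟨w, hw, hmax⟩ := ih
    rcases lexle_total a w with h | h
    · exact ⟨w, Finset.mem_cons_of_mem hw, fun u hu => by
        rcases Finset.mem_cons.1 hu with rfl | hu
        · exact h
        · exact hmax u hu⟩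
    · exact ⟨a, Finset.mem_cons_self a s, fun u hu => by
        rcases Finset.mem_cons.1 hu with rfl | hu
        · exact lexle_refl u
        · exact lexle_trans (hmax u hu) h⟩

lemma exists_isLexMax (m : Fin n → Fin n) (hm : Hess m) :
    ∃ w : Equiv.Perm (Fin n), IsLexMax m w := by
  classical
  have hS : (Finset.univ.filter fun u : Equiv.Perm (Fin n) => ∀ i, u i ≤ m i).Nonempty :=
    ⟨1, Finset.mem_filter.2 ⟨Finset.mem_univ _, fun i => hm.2 i⟩⟩
  obtain ⟨w, hw, hmax⟩ := exists_lexmax_mem _ hS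
  exact ⟨w, (Finset.mem_filter.1 hw).2,
    fun u hu => hmax u (Finset.mem_filter.2 ⟨Finset.mem_univ _, hu⟩)⟩

lemma not_has312_of_isLexMax {m : Fin n → Fin n} {w : Equiv.Perm (Fin n)}
    (hm : Hess m) (h : IsLexMax m w) : ¬ Has312 w := by
  rintro ⟨a, b, c, hab, hbc, h1, h2⟩
  set u : Equiv.Perm (Fin n) := w * Equiv.swap b c with hu
  have hub : u b = w c := by simp [hu, Equiv.swap_apply_left]
  have huc : u c = w b := by simp [hu, Equiv.swap_apply_right]
  have huo : ∀ i, i ≠ b → i ≠ c → u i = w i := fun i hb hc => by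
    simp [hu, Equiv.swap_apply_of_ne_of_ne hb hc]
  have hcon : ∀ i, u i ≤ m i := by
    intro i
    by_cases hib : i = b
    · rw [hib, hub]
      exact le_trans (le_of_lt h2) (le_trans (h.1 a) (hm.1 hab.le))
    by_cases hic : i = c
    · rw [hic, huc]
      exact le_trans (le_of_lt h1) (h.1 c)
    · rw [huo i hib hic]; exact h.1 i
  rcases h.2 u hcon with heq | ⟨i, hag, hl⟩
  · have : u b = w b := congrFun (congrArg (fun p : Equiv.Perm (Fin n) => (p : Fin n → Fin n)) heq) b
    rw [hub] at this
    exact absurd this (ne_of_gt h1)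
  · by_cases hib : i = b
    · rw [hib, hub] at hl; exact absurd hl (not_lt_of_gt h1)
    by_cases hic : i = c
    · have := hag b (hic ▸ hbc)
      rw [hub] at this
      exact absurd this (ne_of_gt h1)
    · rw [huo i hib hic] at hl; exact absurd hl (lt_irrefl _)

lemma m_eq_Mfun {m : Fin n → Fin n} {w : Equiv.Perm (Fin n)}
    (hm : Hess m) (h : IsLexMax m w) : m = Mfun w := by
  funext i
  refine le_antisymm ?_ (Finset.sup'_le _ _ fun j hj =>
    le_trans (h.1 j) (hm.1 (Finset.mem_Iic.1 hj)))
  by_contra hlt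
  push_neg at hlt
  obtain ⟨c, hwc⟩ : ∃ c, w c = m i := ⟨w.symm (m i), w.apply_symm_apply (m i)⟩
  have hic : i < c := by
    rcases lt_trichotomy i c with hh | rfl | hh
    · exact hh
    · exact absurd (hwc ▸ le_Mfun w le_rfl) (not_le_of_gt hlt)
    · exact absurd (hwc ▸ le_Mfun w hh.le) (not_le_of_gt hlt)
  set u : Equiv.Perm (Fin n) := w * Equiv.swap i c with hu
  have hui : u i = m i := by simp [hu, Equiv.swap_apply_left, hwc]
  have huc : u c = w i := by simp [hu, Equiv.swap_apply_right]
  have huo : ∀ j, j ≠ i → j ≠ c → u j = w j := fun j hi' hc' => by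
    simp [hu, Equiv.swap_apply_of_ne_of_ne hi' hc']
  have hcon : ∀ j, u j ≤ m j := by
    intro j
    by_cases hji : j = i
    · subst hji; rw [hui]
    by_cases hjc : j = c
    · subst hjc; rw [huc]
      exact le_trans (le_Mfun w (le_refl i)) (le_trans hlt.le (hm.1 hic.le))
    · rw [huo j hji hjc]; exact h.1 j
  have hwi : w i < m i := lt_of_le_of_lt (le_Mfun w (le_refl i)) hlt
  rcases h.2 u hcon with heq | ⟨i', hag, hl⟩
  · have : u i = w i := congrFun (congrArg (fun p : Equiv.Perm (Fin n) => (p : Fin n → Fin n)) heq) i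
    rw [hui] at this
    exact absurd this (ne_of_gt hwi)
  · rcases lt_trichotomy i' i with hh | rfl | hh
    · rw [huo i' (ne_of_lt hh) (ne_of_lt (hh.trans hic))] at hl
      exact absurd hl (lt_irrefl _)
    · rw [hui] at hl; exact absurd hl (not_lt_of_gt hwi)
    · have := hag i hh
      rw [hui] at this
      exact absurd this (ne_of_gt hwi)

lemma isLexMax_Mfun {w : Equiv.Perm (Fin n)} (hw : ¬ Has312 w) : IsLexMax (Mfun w) w := by
  refine ⟨fun i => le_Mfun w (le_refl i), fun u hu => ?_⟩
  by_cases h : u = w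
  · exact Or.inl h
  have hD : (Finset.univ.filter fun i : Fin n => u i ≠ w i).Nonempty := by
    by_contra hD
    rw [Finset.not_nonempty_iff_eq_empty, Finset.filter_eq_empty_iff] at hD
    exact h (Equiv.ext fun i => not_ne_iff.1 (hD (Finset.mem_univ i)))
  set i := (Finset.univ.filter fun i : Fin n => u i ≠ w i).min' hD with hi
  have hmem := (Finset.univ.filter fun i : Fin n => u i ≠ w i).min'_mem hD
  rw [Finset.mem_filter] at hmem
  have hag : ∀ j < i, u j = w j := by
    intro j hj
    by_contra hne
    exact absurd (Finset.min'_le _ j (Finset.mem_filter.2 ⟨Finset.mem_univ j, hne⟩)) (not_le.2 hj)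
  refine Or.inr ⟨i, hag, ?_⟩
  rcases hmem.2.lt_or_gt with hlt | hlt
  · exact hlt
  exfalso
  -- u i > w i : build a 312 pattern
  obtain ⟨j0, hj0m, hj0⟩ := Finset.exists_mem_eq_sup' (Finset.nonempty_Iic (a := i)) w
  have hvle : u i ≤ w j0 := hj0 ▸ hu i
  have hj0i : j0 < i := by
    rcases lt_or_eq_of_le (Finset.mem_Iic.1 hj0m) with hh | rfl
    · exact hh
    · exact absurd hvle (not_le_of_gt hlt)
  have hvlt : u i < w j0 := by
    rcases lt_or_eq_of_le hvle with hh | hh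
    · exact hh
    · exfalso
      have : u j0 = u i := (hag j0 hj0i).trans hh.symm
      exact absurd (u.injective this) (ne_of_lt hj0i)
  obtain ⟨c, hwc⟩ : ∃ c, w c = u i := ⟨w.symm (u i), w.apply_symm_apply (u i)⟩
  have hicc : i < c := by
    rcases lt_trichotomy i c with hh | rfl | hh
    · exact hh
    · exact absurd hwc (ne_of_lt hlt)
    · exfalso
      have : u c = u i := (hag c hh).trans hwc
      exact absurd (u.injective this) (ne_of_lt hh)
  exact hw ⟨j0, i, c, hj0i, hicc, hwc ▸ hlt, hwc ▸ hvlt⟩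

end Aux

/-- `m ↦ w_m` is a bijection between Hessenberg functions and 312-avoiding
permutations. -/
theorem stmt2 {n : ℕ} :
    (∀ m : Fin n → Fin n, Hess m →
      ∃! w : Equiv.Perm (Fin n), IsLexMax m w ∧ ¬ Has312 w) ∧
    (∀ w : Equiv.Perm (Fin n), ¬ Has312 w →
      ∃! m : Fin n → Fin n, Hess m ∧ IsLexMax m w) := by
  constructor
  · intro m hm
    obtain ⟨w, hw⟩ := exists_isLexMax m hm
    refine ⟨w, ⟨hw, not_has312_of_isLexMax hm hw⟩, ?_⟩
    rintro w' ⟨hw', -⟩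
    exact lexle_antisymm (hw.2 w' hw'.1) (hw'.2 w hw.1)
  · intro w hw
    refine ⟨Mfun w, ⟨hess_Mfun w, isLexMax_Mfun hw⟩, ?_⟩
    rintro m ⟨hm, h⟩
    exact m_eq_Mfun hm h
end

section
/- Let w ∈ S_n be a smooth permutation (avoiding patterns 3412 and 4231) with associated Hessenberg function m_w. Then a transposition t = (i j) with i < j satisfies t ≤ w in Bruhat order if and only if j ≤ m_w(i). -/
open Equiv

/-
Write `prefixMax w i = max (w 0, …, w i)`, positions and values 0-indexed. The rank matrix of
the transposition `(i j)` is that of the identity lowered by one exactly on the square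
`(i, j] × (i, j]`, so `(i j) ≤ w` iff `j ≤ prefixMax w i` and `j ≤ prefixMax w⁻¹ i`. It remains
to show `m_w(i + 1) = min (prefixMax w i) (prefixMax w⁻¹ i) + 1`, by downward induction on `i`.
If row or column `i + 1` carries a coessential box `(i + 1, j + 1)` with `j ≥ i`, avoiding 3412
and 4231 forces the minimum to be `j`. Otherwise the minimum does not change from `i` to `i + 1`,
because a jump of `prefixMax w` right after `i` would make `(i + 1, prefixMax w i + 1)`
coessential.
-/

section

variable {n : ℕ}

lemma rk_inv (w : Perm (Fin n)) (p q : ℕ) : rk w⁻¹ q p = rk w p q :=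
  Finset.card_equiv w⁻¹ fun k => by simp [and_comm]

lemma rk_le_left (w : Perm (Fin n)) (p q : ℕ) : rk w p q ≤ p :=
  calc rk w p q ≤ (Finset.univ.filter fun k : Fin n => (k : ℕ) < p).card :=
        Finset.card_le_card fun k hk => by
          simp only [Finset.mem_filter, Finset.mem_univ, true_and] at hk ⊢; omega
    _ ≤ p := by rw [Fin.card_filter_val_lt]; exact min_le_right n p

lemma rk_lt_left_iff (w : Perm (Fin n)) {p : ℕ} (hp : p ≤ n) (q : ℕ) :
    rk w p q < p ↔ ∃ k : Fin n, (k : ℕ) < p ∧ q ≤ w k := by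
  set S := Finset.univ.filter fun k : Fin n => (k : ℕ) < p
  have hS : S.card = p := by rw [Fin.card_filter_val_lt, min_eq_right hp]
  have hrk : rk w p q = (S.filter fun k => (w k : ℕ) < q).card := by
    rw [rk, Finset.filter_filter]; rfl
  have hle := Finset.card_le_card (Finset.filter_subset (fun k => (w k : ℕ) < q) S)
  have hfull := Finset.card_filter_eq_iff (s := S) (p := fun k => (w k : ℕ) < q)
  rw [hS] at hle hfull
  rw [hrk, hle.lt_iff_ne, Ne, hfull]
  simp [S]

lemma rk_one {p : ℕ} (hp : p ≤ n) (q : ℕ) : rk (1 : Perm (Fin n)) p q = min p q := by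
  rw [← min_eq_right (min_le_of_left_le hp), ← Fin.card_filter_val_lt, rk]
  congr 1; ext k; simp

lemma rk_swap_add {i j : Fin n} (hij : i < j) (p q : ℕ) :
    rk (swap i j) p q + (if (i : ℕ) < p ∧ p ≤ j ∧ (i : ℕ) < q ∧ q ≤ j then 1 else 0) =
      rk (1 : Perm (Fin n)) p q := by
  -- an opaque `g`, so that rewriting `σ k` never reaches inside the sums
  obtain ⟨g, hg⟩ : ∃ g : Perm (Fin n) → Fin n → ℕ, ∀ σ k,
      g σ k = if (k : ℕ) + 1 ≤ p ∧ (σ k : ℕ) + 1 ≤ q then 1 else 0 := ⟨_, fun _ _ => rfl⟩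
  have split : ∀ σ, rk σ p q = ∑ k ∈ Finset.univ \ {i, j}, g σ k + (g σ i + g σ j) := fun σ => by
    rw [← Finset.sum_pair hij.ne, Finset.sum_sdiff (Finset.subset_univ _), rk, Finset.card_filter]
    simp only [hg]
  have hrest : ∑ k ∈ Finset.univ \ {i, j}, g (swap i j) k = ∑ k ∈ Finset.univ \ {i, j}, g 1 k :=
    Finset.sum_congr rfl fun k hk => by
      simp only [Finset.mem_sdiff, Finset.mem_insert, Finset.mem_singleton, not_or] at hk
      rw [hg, hg, swap_apply_of_ne_of_ne hk.2.1 hk.2.2, Perm.one_apply]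
  rw [split, split, hrest, hg _ i, hg _ j, hg 1 i, hg 1 j, swap_apply_left, swap_apply_right,
    Perm.one_apply, Perm.one_apply]
  split_ifs <;> omega

lemma bruhatLE_swap_iff (w : Perm (Fin n)) {i j : Fin n} (hij : i < j) :
    BruhatLE (swap i j) w ↔ (∃ k ≤ i, j ≤ w k) ∧ ∃ k ≤ i, j ≤ w⁻¹ k := by
  constructor
  · intro h
    have hi : (i : ℕ) + 1 ≤ n := by omega
    have hj : (j : ℕ) ≤ n := by omega
    have h₁ := rk_swap_add hij (i + 1) j
    have h₂ := rk_swap_add hij j (i + 1)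
    rw [if_pos (by omega), rk_one hi j] at h₁
    rw [if_pos (by omega), rk_one hj (i + 1)] at h₂
    have hw₁ := h (i + 1) hi j hj
    have hw₂ := h j hj (i + 1) hi
    rw [← rk_inv] at hw₂
    obtain ⟨k, hk, hwk⟩ := (rk_lt_left_iff w hi j).1 (by omega)
    obtain ⟨l, hl, hwl⟩ := (rk_lt_left_iff w⁻¹ hi j).1 (by omega)
    exact ⟨⟨k, by omega, by omega⟩, ⟨l, by omega, by omega⟩⟩
  · rintro ⟨⟨k, hk, hwk⟩, ⟨l, hl, hwl⟩⟩ p hp q hq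
    have hswap := rk_swap_add hij p q
    rw [rk_one hp q] at hswap
    split_ifs at hswap with hbox
    · rcases le_total p q with hpq | hqp
      · have := (rk_lt_left_iff w hp q).2 ⟨k, by omega, by omega⟩
        omega
      · have := (rk_lt_left_iff w⁻¹ hq p).2 ⟨l, by omega, by omega⟩
        rw [rk_inv] at this
        omega
    · have h₁ := rk_le_left w p q
      have h₂ := rk_le_left w⁻¹ q p
      rw [rk_inv] at h₂
      omega

def prefixMax (w : Perm (Fin n)) (i : Fin n) : Fin n :=
  (Finset.Iic i).sup' Finset.nonempty_Iic w

lemma le_prefixMax_iff {w : Perm (Fin n)} {i j : Fin n} :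
    j ≤ prefixMax w i ↔ ∃ k ≤ i, j ≤ w k := by
  simp [prefixMax, Finset.le_sup'_iff]

lemma lt_prefixMax_iff {w : Perm (Fin n)} {i j : Fin n} :
    j < prefixMax w i ↔ ∃ k ≤ i, j < w k := by
  simp [prefixMax, Finset.lt_sup'_iff]

lemma prefixMax_le_iff {w : Perm (Fin n)} {i j : Fin n} :
    prefixMax w i ≤ j ↔ ∀ k ≤ i, w k ≤ j := by
  simp [prefixMax, Finset.sup'_le_iff]

lemma apply_le_prefixMax (w : Perm (Fin n)) {i k : Fin n} (hk : k ≤ i) : w k ≤ prefixMax w i :=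
  prefixMax_le_iff.1 le_rfl k hk

lemma exists_apply_eq_prefixMax (w : Perm (Fin n)) (i : Fin n) :
    ∃ k ≤ i, w k = prefixMax w i := by
  obtain ⟨k, hk, h⟩ := Finset.exists_mem_eq_sup' (Finset.nonempty_Iic (a := i)) w
  exact ⟨k, Finset.mem_Iic.1 hk, h.symm⟩

lemma prefixMax_mono (w : Perm (Fin n)) : Monotone (prefixMax w) := fun _ _ h =>
  Finset.sup'_mono w (Finset.Iic_subset_Iic.2 h) _

lemma self_le_prefixMax (w : Perm (Fin n)) (i : Fin n) : i ≤ prefixMax w i := by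
  by_contra! h
  have hmaps : Set.MapsTo w (Finset.Iic i) (Finset.Iio i) := fun k hk =>
    Finset.mem_Iio.2 ((apply_le_prefixMax w (Finset.mem_Iic.1 hk)).trans_lt h)
  have := Finset.card_le_card_of_injOn w hmaps w.injective.injOn
  simp at this

lemma exists_gt_apply_le (w : Perm (Fin n)) {i k : Fin n} (hk : k ≤ i) (hwk : i < w k) :
    ∃ l, i < l ∧ w l ≤ i := by
  by_contra! h
  have hmaps : Set.MapsTo w ↑(insert k (Finset.Ioi i)) ↑(Finset.Ioi i) := by
    intro l hl
    rcases Finset.mem_insert.1 (Finset.mem_coe.1 hl) with rfl | hl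
    · exact Finset.mem_Ioi.2 hwk
    · exact Finset.mem_Ioi.2 (h l (Finset.mem_Ioi.1 hl))
  have := Finset.card_le_card_of_injOn w hmaps w.injective.injOn
  rw [Finset.card_insert_of_notMem (by simpa using hk)] at this
  omega

lemma ol_coe (w : Perm (Fin n)) (k : Fin n) : ol w ((k : ℕ) + 1) = w k + 1 := by
  rw [ol, dif_pos (by omega)]
  rfl

lemma lt_ol_succ_succ_iff (w : Perm (Fin n)) (i : Fin n) {t : ℕ} (ht : t < n) :
    t + 1 < ol w ((i : ℕ) + 1 + 1) ↔ ∀ k : Fin n, (k : ℕ) = i + 1 → t < w k := by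
  by_cases hi : (i : ℕ) + 1 < n
  · rw [show (i : ℕ) + 1 = ((⟨i + 1, hi⟩ : Fin n) : ℕ) from rfl, ol_coe]
    refine ⟨fun h k hk => ?_, fun h => by simpa using h _ rfl⟩
    obtain rfl : k = ⟨i + 1, hi⟩ := Fin.ext hk
    omega
  · rw [ol, dif_neg (by omega)]
    exact ⟨fun _ k hk => by omega, fun _ => by omega⟩

lemma coess_iff (w : Perm (Fin n)) (i j : Fin n) :
    ((i : ℕ) + 1, (j : ℕ) + 1) ∈ Coess w ↔
      w i ≤ j ∧ (∀ k : Fin n, (k : ℕ) = i + 1 → j < w k) ∧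
        w⁻¹ j ≤ i ∧ ∀ k : Fin n, (k : ℕ) = j + 1 → i < w⁻¹ k := by
  simp only [Coess, Set.mem_ofPred_eq, ol_coe, lt_ol_succ_succ_iff w i j.isLt,
    lt_ol_succ_succ_iff w⁻¹ j i.isLt, Fin.le_def, Fin.lt_def]
  constructor
  · rintro ⟨-, -, -, -, h₁, h₂, h₃, h₄⟩
    exact ⟨by omega, h₂, by omega, h₄⟩
  · rintro ⟨h₁, h₂, h₃, h₄⟩
    exact ⟨by omega, by omega, by omega, by omega, by omega, h₂, by omega, h₄⟩

lemma exists_eq_of_mem_coess {w : Perm (Fin n)} {p : ℕ × ℕ} (hp : p ∈ Coess w) :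
    ∃ i j : Fin n, p = ((i : ℕ) + 1, (j : ℕ) + 1) := by
  obtain ⟨h₁, h₂, h₃, h₄, -⟩ := hp
  exact ⟨⟨p.1 - 1, by omega⟩, ⟨p.2 - 1, by omega⟩, Prod.ext (by simp; omega) (by simp; omega)⟩

lemma mem_coess_inv {w : Perm (Fin n)} {a b : ℕ} : (a, b) ∈ Coess w⁻¹ ↔ (b, a) ∈ Coess w := by
  simp only [Coess, Set.mem_ofPred_eq, inv_inv]
  tauto

lemma mem_coess_of_prefixMax_lt (w : Perm (Fin n)) {i i' : Fin n} (hi' : (i' : ℕ) = i + 1)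
    (h : prefixMax w i < prefixMax w i') :
    ((i : ℕ) + 1, (prefixMax w i : ℕ) + 1) ∈ Coess w := by
  obtain ⟨a, ha, hwa⟩ := exists_apply_eq_prefixMax w i
  rw [coess_iff]
  refine ⟨apply_le_prefixMax w le_rfl, fun k hk => ?_, by simpa [← hwa] using ha,
    fun k hk => ?_⟩
  · by_contra! hwk
    refine h.not_ge (prefixMax_le_iff.2 fun l hl => ?_)
    rcases eq_or_ne l k with rfl | hlk
    · exact hwk
    · exact apply_le_prefixMax w (by omega)
  · by_contra! hk'
    have := apply_le_prefixMax w hk'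
    simp only [Perm.coe_inv, apply_symm_apply] at this
    omega

lemma SmoothPerm.inv {w : Perm (Fin n)} (hw : SmoothPerm w) : SmoothPerm w⁻¹ := by
  refine ⟨fun ⟨a, b, c, d, hab, hbc, hcd, h₁, h₂, h₃⟩ => hw.1 ?_,
    fun ⟨a, b, c, d, hab, hbc, hcd, h₁, h₂, h₃⟩ => hw.2 ?_⟩
  · exact ⟨w⁻¹ c, w⁻¹ d, w⁻¹ a, w⁻¹ b, h₁, h₂, h₃, by simpa, by simpa, by simpa⟩
  · exact ⟨w⁻¹ d, w⁻¹ b, w⁻¹ c, w⁻¹ a, h₁, h₂, h₃, by simpa, by simpa, by simpa⟩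

lemma le_prefixMax_inv_of_not_has3412 {w : Perm (Fin n)} (hw : ¬Has3412 w) {i j : Fin n}
    (hij : i ≤ j) (hsucc : ∀ k : Fin n, (k : ℕ) = i + 1 → j < w k) (hj : w⁻¹ j ≤ i) :
    j ≤ prefixMax w⁻¹ i := by
  by_contra! hlt
  have hpos : ∀ v ≤ i, w⁻¹ v < j := fun v hv => (apply_le_prefixMax w⁻¹ hv).trans_lt hlt
  have hij' : i < j := lt_of_le_of_ne hij fun h => hlt.not_ge (h ▸ self_le_prefixMax w⁻¹ i)
  obtain ⟨u, hu, hwu⟩ := le_prefixMax_iff.1 (self_le_prefixMax w⁻¹ j)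
  have hiu : i < u := lt_of_not_ge fun h => (hpos u h).not_ge hwu
  have huj : u < j := lt_of_le_of_ne hu fun h => by subst h; exact hwu.not_gt (hj.trans_lt hiu)
  obtain ⟨l, hil, hwl⟩ := exists_gt_apply_le w hj (by simpa using hij')
  have hlj : l < j := by simpa using hpos (w l) hwl
  have hi₁ : (i : ℕ) + 1 < n := by omega
  have hsucc' := hsucc ⟨i + 1, hi₁⟩ rfl
  have hl : (l : ℕ) ≠ i + 1 := mt (hsucc l) (not_lt.2 (hwl.trans hij))
  refine hw ⟨w⁻¹ j, ⟨i + 1, hi₁⟩, l, w⁻¹ u, ?_, ?_, ?_, ?_, ?_, ?_⟩ <;>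
    simp only [Fin.lt_def, Perm.coe_inv, apply_symm_apply] at * <;> omega

lemma prefixMax_le_or_prefixMax_inv_le {w : Perm (Fin n)} (hw : SmoothPerm w) {i j : Fin n}
    (hij : i ≤ j) (hi : w i ≤ j) (hsucc : ∀ k : Fin n, (k : ℕ) = i + 1 → j < w k)
    (hj : w⁻¹ j ≤ i) (hjsucc : ∀ k : Fin n, (k : ℕ) = j + 1 → i < w⁻¹ k) :
    prefixMax w i ≤ j ∨ prefixMax w⁻¹ i ≤ j := by
  by_contra! h
  obtain ⟨a, ha, hwa⟩ := lt_prefixMax_iff.1 h.1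
  obtain ⟨v, hv, hwv⟩ := lt_prefixMax_iff.1 h.2
  set b := w⁻¹ j
  set p := w⁻¹ v
  have hwb : w b = j := by simp [b]
  have hwp : w p = v := by simp [p]
  have hj₁ : (j : ℕ) + 1 < n := by omega
  set c := w⁻¹ ⟨j + 1, hj₁⟩
  have hwc : (w c : ℕ) = j + 1 := by simp [c]
  have hic : i < c := hjsucc _ rfl
  have hi₁ : (i : ℕ) + 1 < n := by omega
  set i₁ : Fin n := ⟨i + 1, hi₁⟩
  have hi₁v : (i₁ : ℕ) = i + 1 := rfl
  have hwi₁ : j < w i₁ := hsucc i₁ rfl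
  have hai : a < i := lt_of_le_of_ne ha (by rintro rfl; exact hwa.not_ge hi)
  have hwa' : (j : ℕ) + 1 < w a := by
    have := w.injective.ne (show a ≠ c by omega)
    omega
  have hvj : v < j := by
    have := w.injective.ne (show p ≠ b by omega)
    omega
  have hip : i₁ < p := by
    have := mt (hsucc p) (hwp ▸ not_lt.2 hvj.le)
    omega
  have hcp : c ≠ p := ne_of_apply_ne w (by omega)
  -- a position `x ∈ (a, i]` with value in `(v, j]` completes a 4231 or a 3412
  obtain ⟨x, hax, hxi, hvx, hxj⟩ : ∃ x, a < x ∧ x ≤ i ∧ v < w x ∧ w x ≤ j := by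
    rcases lt_or_gt_of_ne (show a ≠ b from ne_of_apply_ne w (by omega)) with hab | hba
    · exact ⟨b, hab, hj, by omega, by omega⟩
    · refine ⟨i, hai, le_rfl, ?_, hi⟩
      by_contra! hiv
      have := w.injective.ne (show i ≠ p by omega)
      exact hw.1 ⟨b, a, i, p, hba, hai, by omega, by omega, by omega, by omega⟩
  rcases lt_or_gt_of_ne hcp with hcp | hpc
  · exact hw.2 ⟨a, x, c, p, hax, by omega, hcp, by omega, by omega, by omega⟩
  rcases lt_or_gt_of_ne (w.injective.ne (show i₁ ≠ a by omega)) with h₁ | h₁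
  · exact hw.2 ⟨a, x, i₁, p, hax, by omega, hip, by omega, by omega, h₁⟩
  · exact hw.1 ⟨a, i₁, p, c, by omega, hip, hpc, by omega, by omega, h₁⟩

lemma min_prefixMax_eq_of_mem_coess {w : Perm (Fin n)} (hw : SmoothPerm w) {i j : Fin n}
    (hij : i ≤ j) (h : ((i : ℕ) + 1, (j : ℕ) + 1) ∈ Coess w) :
    min (prefixMax w i) (prefixMax w⁻¹ i) = j := by
  obtain ⟨h₁, h₂, h₃, h₄⟩ := (coess_iff w i j).1 h
  have hle : j ≤ prefixMax w i := le_prefixMax_iff.2 ⟨w⁻¹ j, h₃, by simp⟩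
  have hle' := le_prefixMax_inv_of_not_has3412 hw.1 hij h₂ h₃
  exact le_antisymm ((prefixMax_le_or_prefixMax_inv_le hw hij h₁ h₂ h₃ h₄).elim
    min_le_of_left_le min_le_of_right_le) (le_min hle hle')

lemma min_prefixMax_eq_of_mem_coess_swap {w : Perm (Fin n)} (hw : SmoothPerm w) {i j : Fin n}
    (hij : i ≤ j) (h : ((j : ℕ) + 1, (i : ℕ) + 1) ∈ Coess w) :
    min (prefixMax w i) (prefixMax w⁻¹ i) = j := by
  rw [min_comm, ← min_prefixMax_eq_of_mem_coess hw.inv hij (mem_coess_inv.2 h), inv_inv]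

lemma min_prefixMax_succ_eq {w : Perm (Fin n)} {i i' : Fin n} (hi' : (i' : ℕ) = i + 1)
    (h : ∀ J, (i : ℕ) + 1 ≤ J → ((i : ℕ) + 1, J) ∉ Coess w ∧ (J, (i : ℕ) + 1) ∉ Coess w) :
    min (prefixMax w i') (prefixMax w⁻¹ i') = min (prefixMax w i) (prefixMax w⁻¹ i) := by
  have hii' : i ≤ i' := by omega
  refine le_antisymm ?_ (min_le_min (prefixMax_mono w hii') (prefixMax_mono w⁻¹ hii'))
  by_contra! hlt
  rcases le_total (prefixMax w i) (prefixMax w⁻¹ i) with hle | hle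
  · rw [min_eq_left hle] at hlt
    have := self_le_prefixMax w i
    exact (h _ (by omega)).1
      (mem_coess_of_prefixMax_lt w hi' (hlt.trans_le (min_le_left _ _)))
  · rw [min_eq_right hle] at hlt
    have := self_le_prefixMax w⁻¹ i
    exact (h _ (by omega)).2
      (mem_coess_inv.1 (mem_coess_of_prefixMax_lt w⁻¹ hi' (hlt.trans_le (min_le_right _ _))))

lemma mem_coess_last (w : Perm (Fin n)) {i : Fin n} (hi : (i : ℕ) + 1 = n) :
    ((i : ℕ) + 1, (i : ℕ) + 1) ∈ Coess w := by
  rw [coess_iff]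
  exact ⟨by omega, fun k hk => by omega, by omega, fun k hk => by omega⟩

theorem hessenberg_eq_min_prefixMax {w : Perm (Fin n)} (hw : SmoothPerm w) (m : ℕ → ℕ)
    (hmI : ∀ i j : ℕ, i ≤ j → ((i, j) ∈ Coess w ∨ (j, i) ∈ Coess w) → m i = j)
    (hmNI : ∀ i : ℕ, 1 ≤ i → i < n →
      (∀ j, i ≤ j → (i, j) ∉ Coess w ∧ (j, i) ∉ Coess w) → m i = m (i + 1))
    (i : Fin n) : m ((i : ℕ) + 1) = (min (prefixMax w i) (prefixMax w⁻¹ i) : Fin n) + 1 := by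
  by_cases hI : ∃ J, (i : ℕ) + 1 ≤ J ∧ (((i : ℕ) + 1, J) ∈ Coess w ∨ (J, (i : ℕ) + 1) ∈ Coess w)
  · obtain ⟨J, hJ, hmem⟩ := hI
    rw [hmI _ _ hJ hmem]
    rcases hmem with hmem | hmem
    · obtain ⟨_, j, hp⟩ := exists_eq_of_mem_coess hmem
      obtain rfl : J = j + 1 := (Prod.ext_iff.1 hp).2
      rw [min_prefixMax_eq_of_mem_coess hw (by omega) hmem]
    · obtain ⟨j, _, hp⟩ := exists_eq_of_mem_coess hmem
      obtain rfl : J = j + 1 := (Prod.ext_iff.1 hp).1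
      rw [min_prefixMax_eq_of_mem_coess_swap hw (by omega) hmem]
  · push Not at hI
    have hi : (i : ℕ) + 1 < n := by
      by_contra! hi
      exact (hI _ le_rfl).1 (mem_coess_last w (by omega))
    rw [hmNI _ (by omega) hi hI, hessenberg_eq_min_prefixMax hw m hmI hmNI ⟨i + 1, hi⟩,
      min_prefixMax_succ_eq rfl hI]
termination_by n - i

end

/-- For a smooth permutation `w` with associated Hessenberg function `m` (1-indexed),
a transposition `(i j)` with `i < j` is `≤ w` in Bruhat order iff `j ≤ m i`. -/
theorem stmt3 {n : ℕ} (w : Equiv.Perm (Fin n)) (hw : SmoothPerm w) (m : ℕ → ℕ)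
    (hmI : ∀ i j : ℕ, i ≤ j → ((i, j) ∈ Coess w ∨ (j, i) ∈ Coess w) → m i = j)
    (hmNI : ∀ i : ℕ, 1 ≤ i → i < n →
      (∀ j, i ≤ j → (i, j) ∉ Coess w ∧ (j, i) ∉ Coess w) → m i = m (i + 1)) :
    ∀ i j : Fin n, i < j →
      (BruhatLE (Equiv.swap i j) w ↔ (j : ℕ) + 1 ≤ m ((i : ℕ) + 1)) := by
  intro i j hij
  rw [bruhatLE_swap_iff w hij, hessenberg_eq_min_prefixMax hw m hmI hmNI i,
    Nat.add_le_add_iff_right, Fin.val_fin_le, le_min_iff, le_prefixMax_iff, le_prefixMax_iff]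
end

section
/- Let w ∈ S_n avoid the patterns 3412 and 4231, and let s = (l, l+1) be a simple transposition with sw < w < ws in Bruhat order. Then there is at most one permutation z with z ≤ w, ℓ(z) = ℓ(w) − 1, and zs < z. -/
open Equiv

/-!
An element covered by `w` in Bruhat order is `w * (i j)` for an inversion `(i, j)` of `w` such
that no `k` between `i` and `j` has `w k` between `w j` and `w i`. This is proved by induction on
the length, peeling off a descent `(a, a + 1)` of `w` with the lifting property, which the
rank-matrix criterion reduces to a computation in the single row `a + 1`.

If `w` has an ascent at `l` and the cover `w * (i j)` a descent there, then either `j = l` and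
`w (l + 1) < w i`, or `i = l + 1` and `w j < w l`. Two covers of the first kind with different `i`,
or of the second kind with different `j`, exhibit a 3412 pattern, and one of each kind a 4231
pattern.
-/

open Finset

variable {n : ℕ}

def inversions (w : Perm (Fin n)) : Finset (Fin n × Fin n) :=
  {p | p.1 < p.2 ∧ w p.2 < w p.1}

lemma mem_inversions {w : Perm (Fin n)} {p : Fin n × Fin n} :
    p ∈ inversions w ↔ p.1 < p.2 ∧ w p.2 < w p.1 := by
  simp [inversions]

lemma len_eq_card_inversions (w : Perm (Fin n)) : len w = #(inversions w) := rfl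

lemma len_mul (w σ : Perm (Fin n)) :
    len (w * σ) = #{p : Fin n × Fin n | σ⁻¹ p.1 < σ⁻¹ p.2 ∧ w p.2 < w p.1} :=
  card_equiv (σ.prodCongr σ) fun p => by simp only [mem_filter, mem_univ, true_and]; simp

section Length

variable {w : Perm (Fin n)} {i j k a b : Fin n}

lemma lt_of_val_eq_succ (hab : (b : ℕ) = a + 1) : a < b := by
  rw [Fin.lt_def]; omega

lemma len_mul_swap_add_card_le (hij : i < j) (hw : w j < w i)
    {S : Finset (Fin n × Fin n)} (hS : ∀ p ∈ S, p ∈ inversions w ∧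
      swap i j p.2 < swap i j p.1 ∧ w (swap i j p.1) < w (swap i j p.2)) :
    len (w * swap i j) + #S ≤ len w := by
  suffices len (w * swap i j) ≤ #(inversions w \ S) from
    (add_le_add_left this _).trans_eq
      (card_sdiff_add_card_eq_card (s := S) fun p hp => (hS p hp).1)
  rw [len_mul, swap_inv]
  refine card_le_card_of_injOn (fun p => if p.1 < p.2 then p else (swap i j p.1, swap i j p.2))
    (fun p hp => ?_) fun p hp q hq hpq => ?_
  · have hSp := hS (if p.1 < p.2 then p else (swap i j p.1, swap i j p.2))
    simp only [coe_filter, mem_univ, true_and, Set.mem_ofPred_eq, mem_coe, mem_sdiff,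
      mem_inversions] at hp hSp ⊢
    split_ifs at hSp ⊢ with h
    · grind
    · grind
  · simp only [coe_filter, mem_univ, true_and, Set.mem_ofPred_eq] at hp hq hpq
    split_ifs at hpq with h1 h2 h2
    · exact hpq
    · grind [swap_apply_self]
    · grind [swap_apply_self]
    · grind [swap_apply_self, Prod.ext_iff]

lemma len_mul_swap_le_succ (hab : (b : ℕ) = a + 1) : len (w * swap a b) ≤ len w + 1 := by
  rw [len_mul, swap_inv, len_eq_card_inversions]
  refine (card_le_card fun p hp => ?_).trans (card_insert_le (b, a) _)
  simp only [mem_filter, mem_univ, true_and, mem_insert, mem_inversions, Prod.ext_iff] at hp ⊢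
  simp only [Fin.lt_def, Fin.ext_iff] at hp ⊢
  grind

lemma len_mul_swap_lt (hij : i < j) (hw : w j < w i) : len (w * swap i j) < len w := by
  simpa using len_mul_swap_add_card_le (S := {(i, j)}) hij hw (by simp [mem_inversions, hij, hw])

lemma len_mul_swap_add_three_le (hij : i < j) (hw : w j < w i) (hik : i < k) (hkj : k < j)
    (hk : w j < w k ∧ w k < w i) : len (w * swap i j) + 3 ≤ len w := by
  have hk_fixed : swap i j k = k := swap_apply_of_ne_of_ne hik.ne' hkj.ne
  have hcard : #({(i, j), (i, k), (k, j)} : Finset (Fin n × Fin n)) = 3 :=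
    card_eq_three.2 ⟨_, _, _, by simp [hkj.ne'], by simp [hik.ne], by simp [hik.ne], rfl⟩
  rw [← hcard]
  refine len_mul_swap_add_card_le hij hw fun p hp => ?_
  simp only [mem_insert, mem_singleton] at hp
  rcases hp with rfl | rfl | rfl <;>
    simp [mem_inversions, hk_fixed, hij, hik, hkj, hw, hk.1, hk.2]

lemma len_lt_len_mul_swap (hij : i < j) (hw : w i < w j) : len w < len (w * swap i j) := by
  simpa [mul_assoc] using len_mul_swap_lt (w := w * swap i j) hij (by simpa)

lemma len_mul_swap_add_one_eq (hab : (b : ℕ) = a + 1) (hw : w b < w a) :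
    len (w * swap a b) + 1 = len w :=
  le_antisymm (len_mul_swap_lt (lt_of_val_eq_succ hab) hw)
    (by simpa [mul_assoc] using len_mul_swap_le_succ (w := w * swap a b) hab)

lemma len_mul_swap_eq_succ (hab : (b : ℕ) = a + 1) (hw : w a < w b) :
    len (w * swap a b) = len w + 1 :=
  le_antisymm (len_mul_swap_le_succ hab) (len_lt_len_mul_swap (lt_of_val_eq_succ hab) hw)

lemma exists_swap_eq_of_len_mul_swap_lt (hij : i ≠ j) (h : len (w * swap i j) < len w) :
    ∃ i' j', i' < j' ∧ w j' < w i' ∧ swap i j = swap i' j' := by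
  wlog hlt : i < j generalizing i j
  · obtain ⟨i', j', h⟩ := this hij.symm (by rwa [swap_comm]) (hij.lt_or_gt.resolve_left hlt)
    exact ⟨i', j', by rwa [swap_comm]⟩
  refine ⟨i, j, hlt, ?_, rfl⟩
  refine (w.injective.ne hij.symm).lt_or_gt.resolve_right fun hw => ?_
  exact (len_lt_len_mul_swap hlt hw).not_gt h

lemma exists_descent_of_ne_one (hw : w ≠ 1) : ∃ a b : Fin n, (b : ℕ) = a + 1 ∧ w b < w a := by
  by_contra! h
  apply hw
  cases n with
  | zero => exact Subsingleton.elim _ _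
  | succ m =>
    have hmono : StrictMono w := Fin.strictMono_iff_lt_succ.2 fun i =>
      (h i.castSucc i.succ (by simp)).lt_of_ne (w.injective.ne (Fin.castSucc_lt_succ (i := i)).ne)
    exact Equiv.ext fun x => congrFun hmono.eq_id x

end Length

section Rank

variable {u : Perm (Fin n)} {a b : Fin n}

lemma rk_succ (w : Perm (Fin n)) (i : Fin n) (j : ℕ) :
    rk w ((i : ℕ) + 1) j = rk w i j + if (w i : ℕ) + 1 ≤ j then 1 else 0 := by
  unfold rk
  split_ifs with h
  · rw [← card_insert_of_notMem (s := {k : Fin n | (k : ℕ) + 1 ≤ i ∧ (w k : ℕ) + 1 ≤ j}) (a := i)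
      (by simp)]
    congr 1; ext k
    simp only [mem_filter, mem_univ, true_and, mem_insert, Fin.ext_iff]
    grind
  · rw [add_zero]
    congr 1; ext k
    simp only [mem_filter, mem_univ, true_and]
    grind

lemma rk_mul_swap_of_ne (hab : (b : ℕ) = a + 1) {i : ℕ} (hi : i ≠ b) (j : ℕ) :
    rk (u * swap a b) i j = rk u i j := by
  have hswap (k : Fin n) : (swap a b k : ℕ) + 1 ≤ i ↔ (k : ℕ) + 1 ≤ i := by
    rw [swap_apply_def]
    split_ifs with h₁ h₂ <;> subst_vars <;> omega
  refine card_equiv (swap a b) fun k => ?_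
  simp only [mem_filter, mem_univ, true_and]
  simp only [Perm.mul_apply, hswap]

lemma rk_mul_swap_self (hab : (b : ℕ) = a + 1) (j : ℕ) :
    rk (u * swap a b) b j = rk u a j + if (u b : ℕ) + 1 ≤ j then 1 else 0 := by
  rw [hab, rk_succ, rk_mul_swap_of_ne hab (by omega), Perm.mul_apply, swap_apply_left]

end Rank

section Bruhat

variable {z w : Perm (Fin n)} {a b : Fin n}

lemma eq_one_of_bruhatLE_one (h : BruhatLE z 1) : z = 1 := by
  have hle (i : Fin n) : (z i : ℕ) ≤ i := by
    have hrk := h (i + 1) i.isLt (i + 1) i.isLt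
    unfold rk at hrk
    have hset := eq_of_subset_of_card_le (fun k hk => by simp_all) hrk
    have hi := (Finset.ext_iff.1 hset i).2 (by simp)
    simp only [mem_filter] at hi
    omega
  have hsum : ∑ i, (z i : ℕ) = ∑ i : Fin n, (i : ℕ) := Equiv.sum_comp z (fun i => (i : ℕ))
  exact Equiv.ext fun i => Fin.ext <|
    (sum_eq_sum_iff_of_le fun i _ => hle i).1 hsum i (mem_univ _)

lemma BruhatLE.mul_swap (h : BruhatLE z w) (hab : (b : ℕ) = a + 1)
    (hz : z b < z a) : BruhatLE (z * swap a b) (w * swap a b) := by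
  intro i hi j hj
  by_cases hib : i = b
  · subst hib
    rw [rk_mul_swap_self hab, rk_mul_swap_self hab]
    have hrow := h (b + 1) b.isLt j hj
    rw [rk_succ, rk_succ, hab, rk_succ, rk_succ] at hrow
    have hlow := h a (by omega) j hj
    rw [Fin.lt_def] at hz
    split_ifs at hrow ⊢ <;> omega
  · rw [rk_mul_swap_of_ne hab hib, rk_mul_swap_of_ne hab hib]
    exact h i hi j hj

lemma BruhatLE.le_mul_swap (h : BruhatLE z w) (hab : (b : ℕ) = a + 1)
    (hz : z a < z b) : BruhatLE z (w * swap a b) := by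
  intro i hi j hj
  by_cases hib : i = b
  · subst hib
    rw [rk_mul_swap_self hab]
    have hrow := h (b + 1) b.isLt j hj
    rw [rk_succ, rk_succ, hab, rk_succ, rk_succ] at hrow
    have hlow := h a (by omega) j hj
    rw [Fin.lt_def] at hz
    rw [hab, rk_succ]
    split_ifs at hrow ⊢ <;> omega
  · rw [rk_mul_swap_of_ne hab hib]
    exact h i hi j hj

lemma BruhatLE.len_le {z w : Perm (Fin n)} (h : BruhatLE z w) : len z ≤ len w := by
  by_cases hw : w = 1
  · subst hw
    rw [eq_one_of_bruhatLE_one h]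
  obtain ⟨a, b, hab, hwd⟩ := exists_descent_of_ne_one hw
  have hws := len_mul_swap_add_one_eq hab hwd
  rcases (z.injective.ne (lt_of_val_eq_succ hab).ne').lt_or_gt with hzd | hza
  · have := (h.mul_swap hab hzd).len_le
    have := len_mul_swap_add_one_eq hab hzd
    omega
  · have := (h.le_mul_swap hab hza).len_le
    omega
termination_by len w

lemma BruhatLE.eq_of_len_eq {z w : Perm (Fin n)} (h : BruhatLE z w) (hlen : len z = len w) :
    z = w := by
  by_cases hw : w = 1
  · subst hw
    exact eq_one_of_bruhatLE_one h
  obtain ⟨a, b, hab, hwd⟩ := exists_descent_of_ne_one hw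
  have hws := len_mul_swap_add_one_eq hab hwd
  rcases (z.injective.ne (lt_of_val_eq_succ hab).ne').lt_or_gt with hzd | hza
  · have := len_mul_swap_add_one_eq hab hzd
    exact mul_right_cancel ((h.mul_swap hab hzd).eq_of_len_eq (by omega))
  · have := (h.le_mul_swap hab hza).len_le
    omega
termination_by len w

lemma BruhatLT.len_lt (h : BruhatLT z w) : len z < len w :=
  h.1.len_le.lt_of_ne fun hlen => h.2 (h.1.eq_of_len_eq hlen)

lemma descent_of_bruhatLT_mul_swap (hab : (b : ℕ) = a + 1) (h : BruhatLT (z * swap a b) z) :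
    z b < z a :=
  (z.injective.ne (lt_of_val_eq_succ hab).ne').lt_or_gt.resolve_right fun hza =>
    (len_mul_swap_eq_succ hab hza ▸ h.len_lt).not_ge (Nat.le_succ _)

lemma ascent_of_bruhatLT_mul_swap (hab : (b : ℕ) = a + 1) (h : BruhatLT w (w * swap a b)) :
    w a < w b :=
  (w.injective.ne (lt_of_val_eq_succ hab).ne).lt_or_gt.resolve_right fun hwd =>
    (len_mul_swap_add_one_eq hab hwd ▸ h.len_lt).not_ge (Nat.le_succ _)

end Bruhat

section Cover

variable {z w : Perm (Fin n)} {i j p q : Fin n}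

lemma exists_swap_of_cover {z w : Perm (Fin n)} (h : BruhatLE z w) (hlen : len z + 1 = len w) :
    ∃ i j, i < j ∧ w j < w i ∧ z = w * swap i j := by
  by_cases hw : w = 1
  · subst hw
    rw [eq_one_of_bruhatLE_one h] at hlen
    omega
  obtain ⟨a, b, hab, hwd⟩ := exists_descent_of_ne_one hw
  have hws := len_mul_swap_add_one_eq hab hwd
  rcases (z.injective.ne (lt_of_val_eq_succ hab).ne').lt_or_gt with hzd | hza
  · have hzs := len_mul_swap_add_one_eq hab hzd
    obtain ⟨i, j, hij, -, hz⟩ := exists_swap_of_cover (h.mul_swap hab hzd) (by omega)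
    have hconj : z = w * swap (swap a b i) (swap a b j) := by
      rw [swap_apply_apply, swap_inv, ← mul_assoc, ← mul_assoc, ← hz, mul_assoc, swap_mul_self,
        mul_one]
    obtain ⟨i', j', hij', hw', hswap⟩ := exists_swap_eq_of_len_mul_swap_lt
      ((swap a b).injective.ne hij.ne) (by rw [← hconj]; omega)
    exact ⟨i', j', hij', hw', hswap ▸ hconj⟩
  · have := (h.le_mul_swap hab hza).len_le
    exact ⟨a, b, lt_of_val_eq_succ hab, hwd, (h.le_mul_swap hab hza).eq_of_len_eq (by omega)⟩
termination_by len w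

/-- The combinatorial description of the Bruhat covers `w * swap i j ⋖ w`. -/
def IsCoveringSwap (w : Perm (Fin n)) (i j : Fin n) : Prop :=
  i < j ∧ w j < w i ∧ ∀ k, i < k → k < j → ¬ (w j < w k ∧ w k < w i)

lemma exists_isCoveringSwap_of_cover (h : BruhatLE z w) (hlen : len z + 1 = len w) :
    ∃ i j, IsCoveringSwap w i j ∧ z = w * swap i j := by
  obtain ⟨i, j, hij, hw, rfl⟩ := exists_swap_of_cover h hlen
  refine ⟨i, j, ⟨hij, hw, fun k hik hkj hk => ?_⟩, rfl⟩
  have := len_mul_swap_add_three_le hij hw hik hkj hk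
  omega

lemma mul_swap_descent_cases (hpq : p < q) (hasc : w p < w q) (hij : i < j) (hw : w j < w i)
    (hdes : (w * swap i j) q < (w * swap i j) p) :
    (j = p ∧ i < p ∧ w q < w i) ∨ (i = q ∧ q < j ∧ w j < w p) := by
  simp only [Perm.mul_apply, swap_apply_def] at hdes
  split_ifs at hdes <;> subst_vars <;> grind

lemma IsCoveringSwap.left_unique (hw : ¬ Has3412 w) (hpq : p < q) (hasc : w p < w q)
    {i' : Fin n} (hi : IsCoveringSwap w i p) (hi' : IsCoveringSwap w i' p) (hqi : w q < w i)
    (hqi' : w q < w i') : i = i' := by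
  have key {i i' : Fin n} (hi : IsCoveringSwap w i p) (hi' : IsCoveringSwap w i' p)
      (hqi : w q < w i) (hqi' : w q < w i') : ¬ i < i' := fun hii' => by
    have hwii' : w i < w i' := ((w.injective.ne hii'.ne).lt_or_gt.resolve_right
      fun h => hi.2.2 i' hii' hi'.1 ⟨hasc.trans hqi', h⟩)
    exact hw ⟨i, i', p, q, hii', hi'.1, hpq, hasc, hqi, hwii'⟩
  exact le_antisymm (not_lt.1 (key hi' hi hqi' hqi)) (not_lt.1 (key hi hi' hqi hqi'))

lemma IsCoveringSwap.right_unique (hw : ¬ Has3412 w) (hpq : p < q) (hasc : w p < w q)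
    {j' : Fin n} (hj : IsCoveringSwap w q j) (hj' : IsCoveringSwap w q j') (hjp : w j < w p)
    (hjp' : w j' < w p) : j = j' := by
  have key {j j' : Fin n} (hj : IsCoveringSwap w q j) (hj' : IsCoveringSwap w q j')
      (hjp : w j < w p) (hjp' : w j' < w p) : ¬ j < j' := fun hjj' => by
    have hwjj' : w j < w j' := ((w.injective.ne hjj'.ne).lt_or_gt.resolve_right
      fun h => hj'.2.2 j hj.1 hjj' ⟨h, hjp.trans hasc⟩)
    exact hw ⟨p, q, j, j', hpq, hj.1, hjj', hwjj', hjp', hasc⟩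
  exact le_antisymm (not_lt.1 (key hj' hj hjp' hjp)) (not_lt.1 (key hj hj' hjp hjp'))

end Cover

theorem stmt4_general {n : ℕ} (w : Equiv.Perm (Fin n)) (hw : SmoothPerm w)
    (l : Fin n) (hl : (l : ℕ) + 1 < n)
    (s : Equiv.Perm (Fin n)) (hs : s = Equiv.swap l ⟨(l : ℕ) + 1, hl⟩)
    (h2 : BruhatLT w (w * s)) :
    ∀ z z' : Equiv.Perm (Fin n),
      BruhatLE z w → len z + 1 = len w → BruhatLT (z * s) z →
      BruhatLE z' w → len z' + 1 = len w → BruhatLT (z' * s) z' →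
      z = z' := by
  intro z z' hz hzlen hzs hz' hz'len hz's
  subst hs
  set m : Fin n := ⟨l + 1, hl⟩
  have hlm : (m : ℕ) = l + 1 := rfl
  have hasc := ascent_of_bruhatLT_mul_swap hlm h2
  obtain ⟨i, j, hc, rfl⟩ := exists_isCoveringSwap_of_cover hz hzlen
  obtain ⟨i', j', hc', rfl⟩ := exists_isCoveringSwap_of_cover hz' hz'len
  have hlm' := lt_of_val_eq_succ hlm
  rcases mul_swap_descent_cases hlm' hasc hc.1 hc.2.1 (descent_of_bruhatLT_mul_swap hlm hzs)
    with ⟨hjl, hil, hi⟩ | ⟨him, hmj, hjw⟩ <;>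
  rcases mul_swap_descent_cases hlm' hasc hc'.1 hc'.2.1 (descent_of_bruhatLT_mul_swap hlm hz's)
    with ⟨hjl', hil', hi'⟩ | ⟨him', hmj', hjw'⟩
  · subst hjl hjl'
    rw [hc.left_unique hw.1 hlm' hasc hc' hi hi']
  · exact (hw.2 ⟨i, l, m, j', hil, hlm', hmj', hjw', hasc, hi⟩).elim
  · exact (hw.2 ⟨i', l, m, j, hil', hlm', hmj, hjw, hasc, hi'⟩).elim
  · subst him him'
    rw [hc.right_unique hw.1 hlm' hasc hc' hjw hjw']

/-- For smooth `w` with `sw < w < ws`, at most one `z` is covered by `w`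
with `zs < z`. -/
theorem stmt4 {n : ℕ} (w : Equiv.Perm (Fin n)) (hw : SmoothPerm w)
    (l : Fin n) (hl : (l : ℕ) + 1 < n)
    (s : Equiv.Perm (Fin n)) (hs : s = Equiv.swap l ⟨(l : ℕ) + 1, hl⟩)
    (h1 : BruhatLT (s * w) w) (h2 : BruhatLT w (w * s)) :
    ∀ z z' : Equiv.Perm (Fin n),
      BruhatLE z w → len z + 1 = len w → BruhatLT (z * s) z →
      BruhatLE z' w → len z' + 1 = len w → BruhatLT (z' * s) z' →
      z = z' :=
  stmt4_general w hw l hl s hs h2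
end

section
/- Let B be the subgroup of upper triangular invertible n×n matrices and s = (l,l+1) a simple transposition with permutation matrix σ. If w ∈ S_n, w ≠ sws, and w < ws in Bruhat order, then the double cosets B ẇ B and σ B ẇ B σ (where ẇ is the permutation matrix of w) are disjoint. -/
open Equiv

/-- The BorelUT subgroup: invertible upper triangular matrices. -/
def BorelUT (n : ℕ) : Set (Matrix (Fin n) (Fin n) ℂ) :=
  {M | IsUnit M ∧ ∀ i j : Fin n, j < i → M i j = 0}

/-- The double coset `B ẇ B`. -/
def dCoset {n : ℕ} (w : Equiv.Perm (Fin n)) : Set (Matrix (Fin n) (Fin n) ℂ) :=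
  {x | ∃ b1 ∈ BorelUT n, ∃ b2 ∈ BorelUT n, x = b1 * (w.permMatrix ℂ) * b2}

/-!
For `x ∈ B ẇ B`, the rank of the corner of `x` with rows in an up-set `S` and columns in a
down-set `T` does not change under left or right multiplication by `B`, so it equals the
corresponding count `#{k ∈ S | w k ∈ T}` for the permutation matrix. Take `T = {c ≤ t}` with
`w l ≤ t < w (l+1)` and `t ≠ l`; such `t` exists because `w < ws` forces `w l < w (l+1)` and
`w ≠ sws` rules out `w l = l, w (l+1) = l+1`. Conjugation by `σ` fixes this column set and moves
the rows `{> l}` to `{l} ∪ {> l+1}`. If `x = σ y σ` with `x, y ∈ B ẇ B`, submodularity of the row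
rank of `y` over these two row sets gives `r(≥ l) + r(> l+1) ≤ 2 r(> l)`, whereas the counts give
`r(≥ l) = r(> l) + 1` and `r(> l+1) = r(> l)`.
-/

open Module Submodule

theorem finrank_span_image_union_add_finrank_span_image_inter_le {ι K V : Type*} [Field K]
    [AddCommGroup V] [Module K V] [FiniteDimensional K V] (v : ι → V) (S T : Set ι) :
    finrank K (span K (v '' (S ∪ T))) + finrank K (span K (v '' (S ∩ T))) ≤
      finrank K (span K (v '' S)) + finrank K (span K (v '' T)) := by
  rw [← Submodule.finrank_sup_add_finrank_inf_eq (Submodule.span K (v '' S)),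
    ← Submodule.span_union, ← Set.image_union]
  have : span K (v '' (S ∩ T)) ≤ span K (v '' S) ⊓ span K (v '' T) :=
    le_inf (Submodule.span_mono (Set.image_mono Set.inter_subset_left))
      (Submodule.span_mono (Set.image_mono Set.inter_subset_right))
  have := Submodule.finrank_mono this
  omega

namespace Matrix

variable {ι κ K : Type*} [Fintype ι] [DecidableEq ι] [Field K]

variable (K) in
/-- The corner of `M` with rows in `S` and columns in `T` is modelled as
`coordProj K S * M * coordProj K T`: a matrix of the same shape with all other entries zeroed. -/
noncomputable def coordProj (S : Set ι) : Matrix ι ι K := diagonal (S.indicator 1)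

theorem coordProj_mul_coordProj (S T : Set ι) :
    coordProj K S * coordProj K T = coordProj K (S ∩ T) := by
  rw [coordProj, coordProj, coordProj, diagonal_mul_diagonal, Set.inter_indicator_one]
  rfl

theorem row_coordProj_mul (S : Set ι) (N : Matrix ι κ K) :
    (coordProj K S * N).row = S.indicator N.row := by
  ext i j
  by_cases hi : i ∈ S <;> simp [coordProj, hi]

theorem rank_coordProj_mul [Fintype κ] (S : Set ι) (N : Matrix ι κ K) :
    (coordProj K S * N).rank = finrank K (span K (N.row '' S)) := by
  rw [rank_eq_finrank_span_row, row_coordProj_mul]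
  suffices h : span K (Set.range (S.indicator N.row)) = span K (N.row '' S) by rw [h]
  apply le_antisymm <;> rw [Submodule.span_le]
  · rintro _ ⟨i, rfl⟩
    by_cases hi : i ∈ S
    · simpa [hi] using subset_span (Set.mem_image_of_mem _ hi)
    · simp [hi]
  · rintro _ ⟨i, hi, rfl⟩
    exact subset_span ⟨i, by simp [hi]⟩

theorem rank_coordProj_union_mul_add_rank_coordProj_inter_mul_le [Fintype κ]
    (N : Matrix ι κ K) (S T : Set ι) :
    (coordProj K (S ∪ T) * N).rank + (coordProj K (S ∩ T) * N).rank ≤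
      (coordProj K S * N).rank + (coordProj K T * N).rank := by
  simp only [rank_coordProj_mul]
  exact finrank_span_image_union_add_finrank_span_image_inter_le _ S T

section triangular

variable [LinearOrder ι] {b : Matrix ι ι K} {S : Set ι}

theorem coordProj_mul_mul_coordProj_of_isUpperSet (hS : IsUpperSet S)
    (hb : b.BlockTriangular id) : coordProj K S * b * coordProj K S = coordProj K S * b := by
  ext i j
  by_cases hi : i ∈ S
  · by_cases hj : j ∈ S
    · simp [coordProj, hi, hj]
    · have hji : j < i := lt_of_not_ge fun hij => hj (hS hij hi)
      simp [coordProj, hi, hj, hb hji]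
  · simp [coordProj, hi]

theorem coordProj_mul_mul_coordProj_of_isLowerSet (hS : IsLowerSet S)
    (hb : b.BlockTriangular id) : coordProj K S * b * coordProj K S = b * coordProj K S := by
  ext i j
  by_cases hj : j ∈ S
  · by_cases hi : i ∈ S
    · simp [coordProj, hi, hj]
    · have hji : j < i := lt_of_not_ge fun hij => hi (hS hij hj)
      simp [coordProj, hi, hj, hb hji]
  · simp [coordProj, hj]

theorem rank_coordProj_mul_mul_le_of_isUpperSet [Fintype κ] (hS : IsUpperSet S)
    (hb : b.BlockTriangular id) (N : Matrix ι κ K) :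
    (coordProj K S * (b * N)).rank ≤ (coordProj K S * N).rank := by
  rw [← Matrix.mul_assoc, ← coordProj_mul_mul_coordProj_of_isUpperSet hS hb,
    Matrix.mul_assoc (coordProj K S * b)]
  exact rank_mul_le_right _ _

theorem rank_mul_mul_coordProj_le_of_isLowerSet [Fintype κ] (hS : IsLowerSet S)
    (hb : b.BlockTriangular id) (N : Matrix κ ι K) :
    (N * b * coordProj K S).rank ≤ (N * coordProj K S).rank := by
  rw [Matrix.mul_assoc, ← coordProj_mul_mul_coordProj_of_isLowerSet hS hb,
    Matrix.mul_assoc (coordProj K S), ← Matrix.mul_assoc N]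
  exact rank_mul_le_left _ _

theorem rank_coordProj_mul_mul_of_isUpperSet [Fintype κ] (hS : IsUpperSet S)
    (hb : b.BlockTriangular id) (hu : IsUnit b) (N : Matrix ι κ K) :
    (coordProj K S * (b * N)).rank = (coordProj K S * N).rank := by
  refine (rank_coordProj_mul_mul_le_of_isUpperSet hS hb N).antisymm ?_
  let := hu.invertible
  calc (coordProj K S * N).rank = (coordProj K S * (b⁻¹ * (b * N))).rank := by
        rw [← Matrix.mul_assoc b⁻¹, inv_mul_of_invertible, Matrix.one_mul]
    _ ≤ _ := rank_coordProj_mul_mul_le_of_isUpperSet hS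
        (blockTriangular_inv_of_blockTriangular hb) _

theorem rank_mul_mul_coordProj_of_isLowerSet [Fintype κ] (hS : IsLowerSet S)
    (hb : b.BlockTriangular id) (hu : IsUnit b) (N : Matrix κ ι K) :
    (N * b * coordProj K S).rank = (N * coordProj K S).rank := by
  refine (rank_mul_mul_coordProj_le_of_isLowerSet hS hb N).antisymm ?_
  let := hu.invertible
  calc (N * coordProj K S).rank = (N * b * b⁻¹ * coordProj K S).rank := by
        rw [Matrix.mul_assoc N, mul_inv_of_invertible, Matrix.mul_one]
    _ ≤ _ := rank_mul_mul_coordProj_le_of_isLowerSet hS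
        (blockTriangular_inv_of_blockTriangular hb) _

end triangular

theorem isUnit_det_permMatrix (σ : Equiv.Perm ι) : IsUnit (σ.permMatrix K).det := by
  rw [det_permutation]
  exact (Equiv.Perm.sign σ).isUnit.map (Int.castRingHom K)

theorem coordProj_mul_permMatrix (σ : Equiv.Perm ι) (S : Set ι) :
    coordProj K S * σ.permMatrix K = σ.permMatrix K * coordProj K (σ '' S) := by
  ext i j
  by_cases h : σ i = j
  · subst h
    by_cases hi : i ∈ S <;> simp [coordProj, hi]
  · simp [coordProj, h]

theorem rank_coordProj_mul_permMatrix_mul_coordProj (σ : Equiv.Perm ι) (S T : Set ι) :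
    (coordProj K S * σ.permMatrix K * coordProj K T).rank = (S ∩ σ ⁻¹' T).ncard := by
  classical
  rw [coordProj_mul_permMatrix, mul_assoc, coordProj_mul_coordProj,
    rank_mul_eq_right_of_isUnit_det _ _ (isUnit_det_permMatrix σ), coordProj, rank_diagonal,
    ← Set.ncard_image_of_injective _ σ.injective, Set.image_inter σ.injective,
    Set.image_preimage_eq _ σ.surjective, ← Nat.card_coe_set_eq, Nat.card_eq_fintype_card]
  refine Fintype.card_congr (Equiv.subtypeEquivRight fun i => ?_)
  by_cases hi : i ∈ σ '' S ∩ T <;> simp [hi]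

theorem rank_coordProj_mul_permMatrix_mul_mul_permMatrix_mul_coordProj (σ τ : Equiv.Perm ι)
    (S T : Set ι) (M : Matrix ι ι K) :
    (coordProj K S * (σ.permMatrix K * M * τ.permMatrix K) * coordProj K T).rank =
      (coordProj K (σ '' S) * M * coordProj K (τ ⁻¹' T)).rank := by
  have hT : τ.permMatrix K * coordProj K T = coordProj K (τ ⁻¹' T) * τ.permMatrix K := by
    rw [coordProj_mul_permMatrix, Set.image_preimage_eq _ τ.surjective]
  rw [← Matrix.mul_assoc, ← Matrix.mul_assoc, coordProj_mul_permMatrix,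
    Matrix.mul_assoc _ _ (coordProj K T), hT]
  simp only [← Matrix.mul_assoc]
  rw [rank_mul_eq_left_of_isUnit_det _ _ (isUnit_det_permMatrix τ), Matrix.mul_assoc,
    Matrix.mul_assoc, rank_mul_eq_right_of_isUnit_det _ _ (isUnit_det_permMatrix σ),
    Matrix.mul_assoc]

end Matrix

open Matrix

theorem blockTriangular_of_mem_borelUT {n : ℕ} {b : Matrix (Fin n) (Fin n) ℂ}
    (hb : b ∈ BorelUT n) : b.BlockTriangular id :=
  fun i j h => hb.2 i j h

theorem rank_coordProj_mul_mul_coordProj_of_mem_dCoset {n : ℕ} {w : Equiv.Perm (Fin n)}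
    {x : Matrix (Fin n) (Fin n) ℂ} (hx : x ∈ dCoset w) {S T : Set (Fin n)} (hS : IsUpperSet S)
    (hT : IsLowerSet T) : (coordProj ℂ S * x * coordProj ℂ T).rank = (S ∩ w ⁻¹' T).ncard := by
  obtain ⟨b₁, hb₁, b₂, hb₂, rfl⟩ := hx
  rw [← Matrix.mul_assoc (coordProj ℂ S),
    rank_mul_mul_coordProj_of_isLowerSet hT (blockTriangular_of_mem_borelUT hb₂) hb₂.1,
    Matrix.mul_assoc, Matrix.mul_assoc,
    rank_coordProj_mul_mul_of_isUpperSet hS (blockTriangular_of_mem_borelUT hb₁) hb₁.1,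
    ← Matrix.mul_assoc, rank_coordProj_mul_permMatrix_mul_coordProj]

theorem lt_of_bruhatLE_mul_swap {n : ℕ} {w : Equiv.Perm (Fin n)} {a b : Fin n} (hab : a < b)
    (h : BruhatLE w (w * Equiv.swap a b)) : w a < w b := by
  by_contra! hba
  have hba' : w b < w a := lt_of_le_of_ne hba (w.injective.ne hab.ne')
  refine absurd (h (a + 1) (by omega) (w b + 1) (by omega)) (not_le.2 (Finset.card_lt_card ?_))
  rw [Finset.ssubset_iff_of_subset]
  · refine ⟨a, ?_, ?_⟩
    · simp
    · simpa using hba'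
  · intro k hk
    simp only [Fin.val_fin_le, add_le_add_iff_right, Finset.mem_filter, Finset.mem_univ, true_and,
      Perm.coe_mul, Function.comp_apply] at hk ⊢
    obtain ⟨hka, hkw⟩ := hk
    have hk_a : k ≠ a := by rintro rfl; exact absurd hkw (not_le.2 hba')
    have hk_b : k ≠ b := (hka.trans_lt hab).ne
    exact ⟨hka, by rwa [swap_apply_of_ne_of_ne hk_a hk_b]⟩

theorem preimage_swap_Iic {n : ℕ} {l l' t : Fin n} (hl : (l : ℕ) + 1 = l') (ht : t ≠ l) :
    swap l l' ⁻¹' Set.Iic t = Set.Iic t := by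
  ext c
  have := Fin.val_ne_of_ne ht
  simp only [Set.mem_preimage, Set.mem_Iic, swap_apply_def, Fin.le_def, Fin.ext_iff]
  split_ifs <;> omega

theorem image_swap_Ioi {n : ℕ} {l l' : Fin n} (hl : (l : ℕ) + 1 = l') :
    swap l l' '' Set.Ioi l = insert l (Set.Ioi l') := by
  rw [Equiv.image_eq_preimage_symm]
  ext c
  simp only [symm_swap, Set.mem_preimage, Set.mem_Ioi, Set.mem_insert_iff, swap_apply_def,
    Fin.lt_def, Fin.ext_iff]
  split_ifs <;> omega

theorem Ioi_eq_insert_Ioi {n : ℕ} {l l' : Fin n} (hl : (l : ℕ) + 1 = l') :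
    Set.Ioi l = insert l' (Set.Ioi l') := by
  ext i
  simp only [Set.mem_insert_iff, Set.mem_Ioi, Fin.lt_def, Fin.ext_iff]
  omega

theorem image_swap_Ioi_union_Ioi {n : ℕ} {l l' : Fin n} (hl : (l : ℕ) + 1 = l') :
    swap l l' '' Set.Ioi l ∪ Set.Ioi l = Set.Ici l := by
  ext i
  simp only [image_swap_Ioi hl, Set.mem_union, Set.mem_insert_iff, Set.mem_Ioi, Set.mem_Ici,
    Fin.lt_def, Fin.le_def, Fin.ext_iff]
  omega

theorem image_swap_Ioi_inter_Ioi {n : ℕ} {l l' : Fin n} (hl : (l : ℕ) + 1 = l') :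
    swap l l' '' Set.Ioi l ∩ Set.Ioi l = Set.Ioi l' := by
  ext i
  simp only [image_swap_Ioi hl, Set.mem_inter_iff, Set.mem_insert_iff, Set.mem_Ioi, Fin.lt_def,
    Fin.ext_iff]
  omega

theorem ne_permMatrix_swap_mul_mul_permMatrix_swap {n : ℕ} {w : Perm (Fin n)} {l l' t : Fin n}
    (hl : (l : ℕ) + 1 = l') (ht : t ≠ l) (hwl : w l ≤ t) (hwl' : t < w l')
    {x y : Matrix (Fin n) (Fin n) ℂ} (hx : x ∈ dCoset w) (hy : y ∈ dCoset w) :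
    x ≠ (swap l l').permMatrix ℂ * y * (swap l l').permMatrix ℂ := by
  rintro rfl
  set T := Set.Iic t
  set c : Set (Fin n) → ℕ := fun S => (S ∩ w ⁻¹' T).ncard
  have hy_rank : ∀ S, IsUpperSet S → (coordProj ℂ S * (y * coordProj ℂ T)).rank = c S :=
    fun S hS => by
      rw [← Matrix.mul_assoc]
      exact rank_coordProj_mul_mul_coordProj_of_mem_dCoset hy hS (isLowerSet_Iic t)
  have hx_rank : (coordProj ℂ (swap l l' '' Set.Ioi l) * (y * coordProj ℂ T)).rank =
      c (Set.Ioi l) := by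
    show _ = (Set.Ioi l ∩ w ⁻¹' T).ncard
    rw [← rank_coordProj_mul_mul_coordProj_of_mem_dCoset hx (isUpperSet_Ioi l)
      (isLowerSet_Iic t), rank_coordProj_mul_permMatrix_mul_mul_permMatrix_mul_coordProj,
      preimage_swap_Iic hl ht, Matrix.mul_assoc]
  have hsub := rank_coordProj_union_mul_add_rank_coordProj_inter_mul_le (y * coordProj ℂ T)
    (swap l l' '' Set.Ioi l) (Set.Ioi l)
  rw [image_swap_Ioi_union_Ioi hl, image_swap_Ioi_inter_Ioi hl, hy_rank _ (isUpperSet_Ici l),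
    hy_rank _ (isUpperSet_Ioi l'), hy_rank _ (isUpperSet_Ioi l), hx_rank] at hsub
  have hc_Ici : c (Set.Ici l) = c (Set.Ioi l) + 1 := by
    simp only [c, ← Set.Ioi_insert, Set.insert_inter_of_mem (show l ∈ w ⁻¹' T from hwl)]
    exact Set.ncard_insert_of_notMem (by simp)
  have hc_Ioi : c (Set.Ioi l) = c (Set.Ioi l') := by
    simp only [c, Ioi_eq_insert_Ioi hl,
      Set.insert_inter_of_notMem (show l' ∉ w ⁻¹' T from not_le.2 hwl')]
  omega

/-- If `w ≠ sws` and `w < ws`, then `B ẇ B` and `σ B ẇ B σ` are disjoint. -/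
theorem stmt12 {n : ℕ} (l : Fin n) (hl : (l : ℕ) + 1 < n)
    (s : Equiv.Perm (Fin n)) (hs : s = Equiv.swap l ⟨(l : ℕ) + 1, hl⟩)
    (w : Equiv.Perm (Fin n)) (hne : w ≠ s * w * s) (hlt : BruhatLT w (w * s)) :
    ∀ x ∈ dCoset w, ∀ y ∈ dCoset w,
      x ≠ (s.permMatrix ℂ) * y * (s.permMatrix ℂ) := by
  subst hs
  set l' : Fin n := ⟨l + 1, hl⟩
  have hll' : l < l' := Fin.lt_def.2 (Nat.lt_succ_self _)
  have hw : w l < w l' := lt_of_bruhatLE_mul_swap hll' hlt.1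
  obtain ⟨t, ht, hwl, hwl'⟩ : ∃ t, t ≠ l ∧ w l ≤ t ∧ t < w l' := by
    by_cases hfix : w l = l
    · have hfix' : w l' ≠ l' := fun h' => hne <| by
        rw [mul_assoc, mul_swap_eq_swap_mul, hfix, h', ← mul_assoc, Equiv.swap_mul_self, one_mul]
      have hl_lt : l < w l' := hfix ▸ hw
      exact ⟨l', hll'.ne', hfix.le.trans hll'.le, lt_of_le_of_ne hl_lt hfix'.symm⟩
    · exact ⟨w l, hfix, le_rfl, hw⟩
  intro x hx y hy
  exact ne_permMatrix_swap_mul_mul_permMatrix_swap rfl ht hwl hwl' hx hy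
end

section
/- Let w ∈ S_n avoid 3412 and 4231, let s = (l,l+1) with sw < w < ws, and suppose z, z' are two permutations each covered by w in Bruhat order (ℓ = ℓ(w)−1) with zs < z and z's < z'. If the transposed index pairs for z and z' both have second index l (i.e., both arise by swapping positions i1 < l and l in w, with i1 ≠ i1'), then w contains a 3412 pattern, a contradiction; hence z = z'. -/
open Equiv

def gmap {n : ℕ} (i l : Fin n) (x : Fin n × Fin n) : Fin n × Fin n :=
  if Equiv.swap i l x.1 < Equiv.swap i l x.2 then (Equiv.swap i l x.1, Equiv.swap i l x.2)
  else if Equiv.swap i l x.2 = i then (Equiv.swap i l x.1, l)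
  else (i, Equiv.swap i l x.2)

def rmap {n : ℕ} (i l : Fin n) (x : Fin n × Fin n) : Fin n × Fin n :=
  if x.1 = l then (i, x.2)
  else if x.2 = i then (x.1, l)
  else if x.1 = i then (if x.2 < l then x else (l, x.2))
  else if x.2 = l then (if x.1 < i then (x.1, i) else x)
  else x

lemma bruhat_desc {n : ℕ} (u : Equiv.Perm (Fin n)) (l : Fin n) (hl : (l : ℕ) + 1 < n)
    (h : BruhatLE (u * Equiv.swap l ⟨(l : ℕ) + 1, hl⟩) u) :
    u ⟨(l : ℕ) + 1, hl⟩ < u l := by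
  set l' : Fin n := ⟨(l : ℕ) + 1, hl⟩ with hld
  have hne : u l ≠ u l' := by
    intro he
    have : l = l' := u.injective he
    simp [Fin.ext_iff, hld] at this
  rcases lt_or_gt_of_ne hne with hlt | hgt
  · exfalso
    have hb := h ((l : ℕ) + 1) (by omega) ((u l : ℕ) + 1) (by have := (u l).isLt; omega)
    have hlt' : (u l : ℕ) < (u l' : ℕ) := hlt
    have hsub : (Finset.univ.filter fun k : Fin n =>
        (k : ℕ) + 1 ≤ (l : ℕ) + 1 ∧ (((u * Equiv.swap l l') k : Fin n) : ℕ) + 1 ≤ (u l : ℕ) + 1)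
        ⊂ Finset.univ.filter fun k : Fin n =>
        (k : ℕ) + 1 ≤ (l : ℕ) + 1 ∧ ((u k : ℕ)) + 1 ≤ (u l : ℕ) + 1 := by
      rw [Finset.ssubset_iff_of_subset]
      · refine ⟨l, ?_, ?_⟩
        · simp
        · simp only [Finset.mem_filter, Finset.mem_univ, true_and, not_and]
          intro _
          rw [Equiv.Perm.mul_apply, Equiv.swap_apply_left]
          omega
      · intro k hk
        simp only [Finset.mem_filter, Finset.mem_univ, true_and] at hk ⊢
        obtain ⟨hk1, hk2⟩ := hk
        have hkne : k ≠ l := by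
          rintro rfl
          rw [Equiv.Perm.mul_apply, Equiv.swap_apply_left] at hk2
          omega
        have hkval : (k : ℕ) < (l : ℕ) := by
          rcases lt_or_eq_of_le (by omega : (k:ℕ) ≤ (l:ℕ)) with h' | h'
          · exact h'
          · exact absurd (Fin.ext h') hkne
        rw [Equiv.Perm.mul_apply,
          Equiv.swap_apply_of_ne_of_ne hkne (by simp [Fin.ext_iff, hld]; omega)] at hk2
        exact ⟨hk1, hk2⟩
    have := Finset.card_lt_card hsub
    unfold rk at hb
    omega
  · exact hgt


lemma len_three {n : ℕ} (w : Equiv.Perm (Fin n)) (i m0 l : Fin n)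
    (h1 : i < m0) (h2 : m0 < l) (hvl : w l < w m0) (hvi : w m0 < w i) :
    len (w * Equiv.swap i l) + 3 ≤ len w := by
  classical
  have hil : i < l := h1.trans h2
  have hwli : w l < w i := hvl.trans hvi
  set W := Finset.univ.filter (fun p : Fin n × Fin n => p.1 < p.2 ∧ w p.2 < w p.1) with hW
  set Z := Finset.univ.filter
    (fun p : Fin n × Fin n => p.1 < p.2 ∧ (w * Equiv.swap i l) p.2 < (w * Equiv.swap i l) p.1) with hZ
  set E : Finset (Fin n × Fin n) := {(i, l), (i, m0), (m0, l)} with hE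
  have hnotE : ∀ a b : Fin n, a < b → w b < w a →
      (a ≠ i ∨ b ≠ l) → (a ≠ i ∨ b ≠ m0) → (a ≠ m0 ∨ b ≠ l) → (a, b) ∈ W \ E := by
    intro a b hab hv e1 e2 e3
    simp only [Finset.mem_sdiff, hW, hE, Finset.mem_filter, Finset.mem_univ, true_and,
      Finset.mem_insert, Finset.mem_singleton, Prod.mk.injEq]
    refine ⟨⟨hab, hv⟩, ?_⟩
    push_neg
    refine ⟨?_, ?_, ?_⟩ <;> intro hfst
    · rcases e1 with h | h
      · exact absurd hfst h
      · exact h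
    · rcases e2 with h | h
      · exact absurd hfst h
      · exact h
    · rcases e3 with h | h
      · exact absurd hfst h
      · exact h
  have key : ∀ x ∈ Z, gmap i l x ∈ W \ E ∧ rmap i l (gmap i l x) = x := by
    rintro ⟨p, q⟩ hx
    simp only [hZ, Finset.mem_filter, Finset.mem_univ, true_and] at hx
    obtain ⟨hpq, hinv⟩ := hx
    rw [Equiv.Perm.mul_apply, Equiv.Perm.mul_apply] at hinv
    rcases eq_or_ne p i with rfl | hpi
    · -- p = i
      rw [Equiv.swap_apply_left] at hinv
      rcases eq_or_ne q l with rfl | hql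
      · -- q = l : impossible
        rw [Equiv.swap_apply_right] at hinv
        exact absurd hinv (lt_asymm hwli)
      · have hqi : q ≠ p := ne_of_gt hpq
        rw [Equiv.swap_apply_of_ne_of_ne hqi hql] at hinv
        -- hinv : w q < w l
        rcases hql.lt_or_gt with hqlt | hqgt
        · -- case 3 : i < q < l, image (i, q)
          have hg : gmap p l (p, q) = (p, q) := by
            simp only [gmap, Equiv.swap_apply_left, Equiv.swap_apply_of_ne_of_ne hqi hql]
            rw [if_neg (by exact not_lt.2 (le_of_lt hqlt)), if_neg hqi]
          rw [hg]
          constructor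
          · exact hnotE p q hpq (hinv.trans hwli) (Or.inr hql)
              (Or.inr (by rintro rfl; exact lt_asymm hvl hinv)) (Or.inl (ne_of_lt h1))
          · simp [rmap, ne_of_lt hil, hqi, hqlt]
        · -- case 2 : q > l, image (l, q)
          have hg : gmap p l (p, q) = (l, q) := by
            simp only [gmap, Equiv.swap_apply_left, Equiv.swap_apply_of_ne_of_ne hqi hql]
            rw [if_pos hqgt]
          rw [hg]
          constructor
          · exact hnotE l q hqgt (hinv) (Or.inl (ne_of_gt hil))
              (Or.inl (ne_of_gt hil)) (Or.inl (ne_of_gt h2))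
          · simp [rmap]
    · rcases eq_or_ne p l with rfl | hpl
      · -- p = l, q > l, case 6 : image (i, q)
        have hql : q ≠ p := ne_of_gt hpq
        have hqi : q ≠ i := ne_of_gt (hil.trans hpq)
        rw [Equiv.swap_apply_right, Equiv.swap_apply_of_ne_of_ne hqi hql] at hinv
        -- hinv : w q < w i
        have hg' : gmap i p (p, q) = (i, q) := by
          simp only [gmap, Equiv.swap_apply_right, Equiv.swap_apply_of_ne_of_ne hqi hql]
          rw [if_pos (hil.trans hpq)]
        rw [hg']
        constructor
        · exact hnotE i q (hil.trans hpq) hinv (Or.inr hql)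
            (Or.inr (ne_of_gt (h2.trans hpq))) (Or.inl (ne_of_lt h1))
        · simp [rmap, ne_of_lt hil, hqi, not_lt.2 hpq.le]
      · -- p ∉ {i, l}
        rw [Equiv.swap_apply_of_ne_of_ne hpi hpl] at hinv
        rcases eq_or_ne q i with rfl | hqi
        · -- q = i, p < i, case 7 : image (p, l)
          rw [Equiv.swap_apply_left] at hinv
          -- hinv : w l < w p
          have hg : gmap q l (p, q) = (p, l) := by
            simp only [gmap, Equiv.swap_apply_left, Equiv.swap_apply_of_ne_of_ne hpi hpl]
            rw [if_pos (hpq.trans hil)]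
          rw [hg]
          constructor
          · exact hnotE p l (hpq.trans hil) hinv (Or.inl hpi)
              (Or.inl hpi) (Or.inl (ne_of_lt (hpq.trans h1)))
          · simp [rmap, hpl, ne_of_gt hil, hpi, hpq]
        · rcases eq_or_ne q l with rfl | hql
          · -- q = l
            rw [Equiv.swap_apply_right] at hinv
            -- hinv : w i < w p
            rcases hpi.lt_or_gt with hplt | hpgt
            · -- p < i, case 4 : image (p, i)
              have hg : gmap i q (p, q) = (p, i) := by
                simp only [gmap, Equiv.swap_apply_right, Equiv.swap_apply_of_ne_of_ne hpi hpl]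
                rw [if_pos hplt]
              rw [hg]
              constructor
              · exact hnotE p i hplt hinv (Or.inr (ne_of_lt hil))
                  (Or.inr (ne_of_lt h1)) (Or.inr (ne_of_lt hil))
              · simp [rmap, hpl]
            · -- i < p < q = l, case 5 : image (p, l)
              have hg : gmap i q (p, q) = (p, q) := by
                simp [gmap, Equiv.swap_apply_right, Equiv.swap_apply_of_ne_of_ne hpi hpl,
                  not_lt.2 hpgt.le]
              rw [hg]
              constructor
              · exact hnotE p q hpq (hwli.trans hinv) (Or.inl hpi) (Or.inl hpi)
                  (Or.inl (by rintro rfl; exact lt_asymm hvi hinv))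
              · simp [rmap, hpl, ne_of_gt hil, hpi, not_lt.2 hpgt.le]
          · -- q ∉ {i, l} : case 1, image (p, q)
            rw [Equiv.swap_apply_of_ne_of_ne hqi hql] at hinv
            have hg : gmap i l (p, q) = (p, q) := by
              simp only [gmap, Equiv.swap_apply_of_ne_of_ne hpi hpl,
                Equiv.swap_apply_of_ne_of_ne hqi hql]
              rw [if_pos hpq]
            rw [hg]
            constructor
            · exact hnotE p q hpq hinv (Or.inl hpi) (Or.inl hpi) (Or.inr hql)
            · simp [rmap, hpl, hqi, hpi, hql]
  -- conclude
  have hinj : Set.InjOn (gmap i l) Z := by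
    intro x hx y hy hxy
    have hrx := (key x hx).2
    have hry := (key y hy).2
    rw [← hrx, hxy, hry]
  have hcard : Z.card ≤ (W \ E).card :=
    Finset.card_le_card_of_injOn _ (fun x hx => (key x hx).1) hinj
  have hEW : E ⊆ W := by
    intro x hx
    simp only [hE, Finset.mem_insert, Finset.mem_singleton] at hx
    rcases hx with rfl | rfl | rfl <;>
      simp only [hW, Finset.mem_filter, Finset.mem_univ, true_and]
    · exact ⟨hil, hwli⟩
    · exact ⟨h1, hvi⟩
    · exact ⟨h2, hvl⟩
  have hEcard : E.card = 3 := by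
    rw [hE]
    rw [Finset.card_insert_of_notMem, Finset.card_insert_of_notMem, Finset.card_singleton]
    · simp only [Finset.mem_singleton, Prod.mk.injEq, not_and]
      intro h; exact absurd h (ne_of_lt h1)
    · simp only [Finset.mem_insert, Finset.mem_singleton, Prod.mk.injEq, not_or, not_and]
      exact ⟨fun _ => ne_of_gt h2, fun h => absurd h (ne_of_lt h1)⟩
  have hsd := Finset.card_sdiff_of_subset hEW
  have hWE := Finset.card_le_card hEW
  have hlz : len (w * Equiv.swap i l) = Z.card := rfl
  have hlw : len w = W.card := rfl
  omega


/-- (Case 1 in the proof of Proposition about uniqueness of `z`.) If two Bruhat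
covers `z = w·(i1 l)`, `z' = w·(i1' l)` of the smooth permutation `w` both swap
some position with `l` and satisfy `zs < z`, `z's < z'`, then `z = z'`. -/
theorem stmt18 {n : ℕ} (w : Equiv.Perm (Fin n)) (hw : SmoothPerm w)
    (l : Fin n) (hl : (l : ℕ) + 1 < n)
    (s : Equiv.Perm (Fin n)) (hs : s = Equiv.swap l ⟨(l : ℕ) + 1, hl⟩)
    (h1 : BruhatLT (s * w) w) (h2 : BruhatLT w (w * s))
    (i1 i1' : Fin n) (hi1 : i1 < l) (hi1' : i1' < l)
    (z z' : Equiv.Perm (Fin n))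
    (hz : z = w * Equiv.swap i1 l) (hz' : z' = w * Equiv.swap i1' l)
    (hzc : BruhatLE z w) (hzl : len z + 1 = len w) (hzs : BruhatLT (z * s) z)
    (hzc' : BruhatLE z' w) (hzl' : len z' + 1 = len w)
    (hzs' : BruhatLT (z' * s) z') :
    z = z' := by
  subst hs hz hz'
  set l' : Fin n := ⟨(l : ℕ) + 1, hl⟩ with hld
  have hll' : l < l' := by simp [Fin.lt_def, hld]
  -- w l < w l'
  have hwl : w l < w l' := by
    have hb : BruhatLE ((w * Equiv.swap l l') * Equiv.swap l l') (w * Equiv.swap l l') := by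
      rw [mul_assoc, Equiv.swap_mul_self, mul_one]
      exact h2.1
    have hd := bruhat_desc (w * Equiv.swap l l') l hl hb
    rwa [Equiv.Perm.mul_apply, Equiv.Perm.mul_apply, Equiv.swap_apply_left,
      Equiv.swap_apply_right] at hd
  have hswap : ∀ j : Fin n, j < l →
      (w * Equiv.swap j l) l' = w l' ∧ (w * Equiv.swap j l) l = w j := by
    intro j hj
    constructor
    · rw [Equiv.Perm.mul_apply,
        Equiv.swap_apply_of_ne_of_ne (ne_of_gt (hj.trans hll')) (ne_of_gt hll')]
    · rw [Equiv.Perm.mul_apply, Equiv.swap_apply_right]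
  have hv1 : w l' < w i1 := by
    have hd := bruhat_desc (w * Equiv.swap i1 l) l hl hzs.1
    rwa [(hswap i1 hi1).1, (hswap i1 hi1).2] at hd
  have hv1' : w l' < w i1' := by
    have hd := bruhat_desc (w * Equiv.swap i1' l) l hl hzs'.1
    rwa [(hswap i1' hi1').1, (hswap i1' hi1').2] at hd
  rcases lt_trichotomy i1 i1' with hc | hc | hc
  · exfalso
    have hvne : w i1 ≠ w i1' := fun he => (ne_of_lt hc) (w.injective he)
    rcases lt_or_gt_of_ne hvne with hv | hv
    · exact hw.1 ⟨i1, i1', l, l', hc, hi1', hll', hwl, hv1, hv⟩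
    · have := len_three w i1 i1' l hc hi1' (hwl.trans hv1') hv
      omega
  · rw [hc]
  · exfalso
    have hvne : w i1' ≠ w i1 := fun he => (ne_of_lt hc) (w.injective he)
    rcases lt_or_gt_of_ne hvne with hv | hv
    · exact hw.1 ⟨i1', i1, l, l', hc, hi1, hll', hwl, hv1', hv⟩
    · have := len_three w i1' i1 l hc hi1 (hwl.trans hv1) hv
      omega
end
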